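/- arXiv:1810.07083 — 10 statements merged into one kernel-verified Lean document; each statement's English description precedes it below -/
import Mathlib

section
/- Let D = {0,...,n} and k ≥ 1. List the words of D^k in increasing lexicographic order as w_0, w_1, ..., w_{(n+1)^k - 1}, and let W_0 be their concatenation in this order. Let c be the word W_0 followed by k-1 zeros. Then for every word w of length k over D, the number of positions 1 ≤ j ≤ k·(n+1)^k such that c_j c_{j+1} ... c_{j+k-1} = w equals exactly k. -/
/-!
The window of length `k` starting at offset `r < k` inside the `l`-th block consists of the last
`k - r` letters of `w_l` followed by the first `r` letters of `w_{l+1}`; for `l + 1 = (n+1)^k` the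
appended zeros play the role of `w_{(n+1)^k} = 0^k`. Reading words as base-`(n+1)` numbers, `w`
occurs there iff the low `k - r` digits of `l` and the top `r` digits of `l + 1` are prescribed.
The low digits fix whether adding `1` carries into the top digits, so for each offset `r` exactly
one block `l` qualifies, giving `k` occurrences in total.
-/

open Finset

namespace Nat

theorem forall_lt_sub_one_sub_iff {L : ℕ} {p : ℕ → Prop} :
    (∀ t < L, p (L - 1 - t)) ↔ ∀ i < L, p i := by
  refine ⟨fun h i hi => ?_, fun h t ht => h _ (by omega)⟩
  simpa [show L - 1 - (L - 1 - i) = i by omega] using h (L - 1 - i) (by omega)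

theorem mod_pow_eq_mod_pow_iff {b x y : ℕ} :
    ∀ L, x % b ^ L = y % b ^ L ↔ ∀ i < L, x / b ^ i % b = y / b ^ i % b
  | 0 => by simp [Nat.mod_one]
  | L + 1 => by
    rw [forall_lt_succ_right, ← mod_pow_eq_mod_pow_iff L]
    have hdvd : b ^ L ∣ b ^ (L + 1) := pow_dvd_pow b L.le_succ
    refine ⟨fun h => ⟨?_, ?_⟩, fun ⟨hlow, htop⟩ => by
      rw [mod_pow_succ, mod_pow_succ, hlow, htop]⟩
    · rw [← mod_mod_of_dvd x hdvd, h, mod_mod_of_dvd _ hdvd]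
    · rw [← mod_mul_right_div_self, ← mod_mul_right_div_self, ← pow_succ, h]

theorem mod_pow_eq_mod_pow_iff_rev {b x y L : ℕ} :
    x % b ^ L = y % b ^ L ↔ ∀ t < L, x / b ^ (L - 1 - t) % b = y / b ^ (L - 1 - t) % b := by
  rw [mod_pow_eq_mod_pow_iff,
    forall_lt_sub_one_sub_iff (p := fun i => x / b ^ i % b = y / b ^ i % b)]

theorem exists_forall_lt_div_pow_mod_eq {b : ℕ} (d : ℕ → ℕ) :
    ∀ L, (∀ i < L, d i < b) → ∃ x, ∀ i < L, x / b ^ i % b = d i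
  | 0, _ => ⟨0, by simp⟩
  | L + 1, hd => by
    obtain ⟨x, hx⟩ := exists_forall_lt_div_pow_mod_eq d L fun i hi => hd i (by omega)
    have hb : 0 < b ^ L := Nat.pow_pos (by have := hd 0 (by omega); omega)
    refine ⟨x % b ^ L + b ^ L * d L, forall_lt_succ_right.mpr ⟨?_, ?_⟩⟩
    · have hlow : (x % b ^ L + b ^ L * d L) % b ^ L = x % b ^ L := by
        rw [add_mul_mod_self_left, mod_mod]
      intro i hi
      rw [(mod_pow_eq_mod_pow_iff L).mp hlow i hi, hx i hi]
    · rw [add_comm, mul_add_div hb, div_eq_of_lt (mod_lt x hb), add_zero,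
        mod_eq_of_lt (hd L (by omega))]

theorem existsUnique_lt_add_mod_eq {B P : ℕ} (e : ℕ) (hP : P < B) :
    ∃! H, H < B ∧ (H + e) % B = P := by
  have hB : 0 < B := by omega
  -- adding `(B - 1) * e` undoes the shift by `e` modulo `B`
  have hH₀ : ((P + (B - 1) * e) % B + e) % B = P := by
    rw [mod_add_mod, add_assoc, ← succ_mul, succ_eq_add_one, sub_one_add_one_eq_of_pos hB,
      add_mul_mod_self_left, mod_eq_of_lt hP]
  refine ⟨_, ⟨mod_lt _ hB, hH₀⟩, fun H ⟨hH, hHe⟩ => ?_⟩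
  exact (ModEq.add_right_cancel' e (hHe.trans hH₀.symm)).eq_of_lt_of_lt hH (mod_lt _ hB)

end Nat

theorem existsUnique_lt_mul_mod_eq_succ_div_mod_eq {A B S P : ℕ} (hS : S < A) (hP : P < B) :
    ∃! l, l < A * B ∧ l % A = S ∧ (l + 1) / A % B = P := by
  have hA : 0 < A := by omega
  -- once the low part `S` is fixed, the carry `(S + 1) / A` into the high part is fixed too
  have hsucc : ∀ H, (A * H + S + 1) / A = H + (S + 1) / A := fun H => by
    rw [add_assoc, Nat.mul_add_div hA]
  obtain ⟨H, ⟨hHB, hHP⟩, hHuniq⟩ := Nat.existsUnique_lt_add_mod_eq ((S + 1) / A) hP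
  refine ⟨A * H + S, ⟨?_, ?_, by rwa [hsucc]⟩, ?_⟩
  · calc A * H + S < A * (H + 1) := by rw [mul_add_one]; omega
      _ ≤ A * B := Nat.mul_le_mul_left A hHB
  · rw [Nat.mul_add_mod, Nat.mod_eq_of_lt hS]
  · rintro l ⟨hl, hlS, hlP⟩
    have hl' : A * (l / A) + S = l := hlS ▸ Nat.div_add_mod l A
    rw [← hl', hHuniq (l / A) ⟨Nat.div_lt_of_lt_mul hl, by rwa [← hsucc, hl']⟩]

theorem card_filter_range_mul_eq_of_existsUnique {k N : ℕ} {p : ℕ → Prop} [DecidablePred p]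
    (h : ∀ r < k, ∃! l, l < N ∧ p (k * l + r)) : #{j ∈ range (k * N) | p j} = k := by
  have hdecomp : ∀ j, j < k * N → j / k < N ∧ j % k < k := fun j hj =>
    ⟨Nat.div_lt_of_lt_mul hj, Nat.mod_lt j (Nat.pos_of_mul_pos_right (by omega : 0 < k * N))⟩
  calc #{j ∈ range (k * N) | p j} = #(range k) := by
        refine card_bij (fun j _ => j % k) (fun j hj => ?_) (fun j₁ hj₁ j₂ hj₂ hmod => ?_)
          (fun r hr => ?_)
        · simp only [mem_filter, mem_range] at hj ⊢
          exact (hdecomp j hj.1).2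
        · simp only [mem_filter, mem_range] at hj₁ hj₂ hmod
          have hp : ∀ j, p (k * (j / k) + j % k) = p j := fun j => by rw [Nat.div_add_mod]
          obtain ⟨hN₁, hr⟩ := hdecomp j₁ hj₁.1
          have hq := (h _ hr).unique ⟨hN₁, (hp j₁).symm ▸ hj₁.2⟩
            ⟨(hdecomp j₂ hj₂.1).1, by rw [hmod, hp]; exact hj₂.2⟩
          rw [← Nat.div_add_mod j₁ k, ← Nat.div_add_mod j₂ k, hq, hmod]
        · obtain ⟨l, ⟨hl, hpl⟩, -⟩ := h r (mem_range.mp hr)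
          refine ⟨k * l + r, mem_filter.mpr ⟨mem_range.mpr ?_, hpl⟩, ?_⟩
          · calc k * l + r < k * (l + 1) := by rw [mul_add_one]; have := mem_range.mp hr; omega
              _ ≤ k * N := Nat.mul_le_mul_left k hl
          · rw [Nat.mul_add_mod, Nat.mod_eq_of_lt (mem_range.mp hr)]
    _ = k := card_range k

def champernowne (b k j : ℕ) : ℕ :=
  if j < k * b ^ k then j / k / b ^ (k - 1 - j % k) % b else 0

section Champernowne

variable {b k : ℕ}

theorem champernowne_mul_add (hb : 0 < b) {l t : ℕ} (hl : l ≤ b ^ k) (ht : t < k) :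
    champernowne b k (k * l + t) = l / b ^ (k - 1 - t) % b := by
  have hdiv : (k * l + t) / k = l := by
    rw [Nat.mul_add_div (by omega), Nat.div_eq_of_lt ht, add_zero]
  have hmod : (k * l + t) % k = t := by rw [Nat.mul_add_mod, Nat.mod_eq_of_lt ht]
  unfold champernowne
  rcases hl.lt_or_eq with hl | rfl
  · rw [if_pos (by nlinarith), hdiv, hmod]
  · rw [if_neg (by nlinarith), Nat.pow_div (by omega) hb, show k - (k - 1 - t) = t + 1 by omega,
      pow_succ, Nat.mul_mod_left]

theorem champernowne_window_iff (hb : 0 < b) {l r W : ℕ} {w : ℕ → ℕ} (hl : l < b ^ k)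
    (hr : r < k) (hw : ∀ t < k, w t = W / b ^ (k - 1 - t) % b) :
    (∀ t < k, champernowne b k (k * l + r + t) = w t) ↔
      l % b ^ (k - r) = W / b ^ r % b ^ (k - r) ∧ (l + 1) / b ^ (k - r) % b ^ r = W % b ^ r := by
  have hsplit : (∀ t < k, champernowne b k (k * l + r + t) = w t) ↔
      (∀ t < k - r, champernowne b k (k * l + r + t) = w t) ∧
        ∀ s < r, champernowne b k (k * l + r + (k - r + s)) = w (k - r + s) :=
    ⟨fun h => ⟨fun t ht => h t (by omega), fun s hs => h _ (by omega)⟩,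
      fun ⟨hlow, hhigh⟩ t ht => if htr : t < k - r then hlow t htr else by
        simpa [show k - r + (t - (k - r)) = t by omega] using hhigh (t - (k - r)) (by omega)⟩
  rw [hsplit, Nat.mod_pow_eq_mod_pow_iff_rev, Nat.mod_pow_eq_mod_pow_iff_rev]
  refine and_congr (forall₂_congr fun t ht => ?_) (forall₂_congr fun s hs => ?_)
  · rw [add_assoc, champernowne_mul_add hb hl.le (by omega), hw t (by omega),
      Nat.div_div_eq_div_mul, ← pow_add, show k - 1 - (r + t) = k - r - 1 - t by omega,
      show r + (k - r - 1 - t) = k - 1 - t by omega]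
  · rw [show k * l + r + (k - r + s) = k * (l + 1) + s by rw [mul_add_one]; omega,
      champernowne_mul_add hb hl (by omega), hw _ (by omega), Nat.div_div_eq_div_mul, ← pow_add,
      show k - r + (r - 1 - s) = k - 1 - s by omega, show k - 1 - (k - r + s) = r - 1 - s by omega]

end Champernowne

theorem champernowne_block_count_general (n k : ℕ)
    (c : ℕ → ℕ)
    (hc : ∀ j, c j =
      if j < k * (n + 1) ^ k then ((j / k) / (n + 1) ^ (k - 1 - j % k)) % (n + 1) else 0)
    (w : ℕ → ℕ) (hw : ∀ t < k, w t ≤ n) :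
    ((Finset.range (k * (n + 1) ^ k)).filter (fun j => ∀ t < k, c (j + t) = w t)).card = k := by
  obtain rfl : c = champernowne (n + 1) k := funext hc
  obtain ⟨W, hW⟩ := Nat.exists_forall_lt_div_pow_mod_eq (b := n + 1) (fun i => w (k - 1 - i)) k
    fun i hi => Nat.lt_succ_of_le (hw _ (by omega))
  have hwW : ∀ t < k, w t = W / (n + 1) ^ (k - 1 - t) % (n + 1) := fun t ht => by
    rw [hW _ (by omega), show k - 1 - (k - 1 - t) = t by omega]
  apply card_filter_range_mul_eq_of_existsUnique
  intro r hr
  rw [existsUnique_congr fun l => and_congr_right fun hl =>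
    champernowne_window_iff (Nat.succ_pos n) hl hr hwW, ← pow_sub_mul_pow _ hr.le]
  exact existsUnique_lt_mul_mod_eq_succ_div_mod_eq (Nat.mod_lt _ (by positivity))
    (Nat.mod_lt _ (by positivity))

/-- In the Champernowne-type word `c = W₀ 0^{k-1}` (the concatenation of all
`(n+1)^k` words of length `k` over `{0,…,n}` in increasing lexicographic order, followed by
`k-1` zeros), every word `w` of length `k` occurs exactly `k` times among the positions
`j < k·(n+1)^k`.  The `l`-th word in lexicographic order has `t`-th letter
`l / (n+1)^(k-1-t) % (n+1)`. -/
theorem champernowne_block_count (n k : ℕ) (hn : 1 ≤ n) (hk : 1 ≤ k)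
    (c : ℕ → ℕ)
    (hc : ∀ j, c j =
      if j < k * (n + 1) ^ k then ((j / k) / (n + 1) ^ (k - 1 - j % k)) % (n + 1) else 0)
    (w : ℕ → ℕ) (hw : ∀ t < k, w t ≤ n) :
    ((Finset.range (k * (n + 1) ^ k)).filter (fun j => ∀ t < k, c (j + t) = w t)).card = k :=
  champernowne_block_count_general n k c hc w hw
end

section
/- Let D = {0,...,n}, k ≥ 1, and for 0 ≤ i ≤ n let W_i be the concatenation w_i w_{i+1} ⋯ w_{(n+1)^k-1} w_0 ⋯ w_{i-1} of all length-k words over D written in lexicographic order starting from the i-th word (cyclically). Then every infinite sequence a ∈ {W_0, ..., W_n}^ℕ (i.e., every infinite concatenation of blocks chosen from {W_0,...,W_n}) is k-simply normal: for every word b of length k over D, the frequency of occurrences of b as a factor of a equals (n+1)^{-k}. -/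
/-
Write `N = n + 1` and `K = N ^ k`. The sequence `a` is a concatenation of length-`k` words, the
`t`-th word of block `m` being the base-`N` expansion of `(f m + t) mod K`. An occurrence of `w`
starting at offset `r < k` inside a word `x` means `x ≡ A (mod N ^ (k - r))` and
`x' / N ^ (k - r) = B` for the next word `x'`, where `A` and `B` are the values of the last `k - r`
and first `r` letters of `w`. Inside a block `x' = x + 1 mod K`; across a block boundary this
may fail, but `x' / N ^ (k - r) = (x + 1 mod K) / N ^ (k - r) = 0` as both words are `< N`. As
`t ↦ (f m + t) mod K` permutes `{0, …, K - 1}`, each block and offset contributes exactly one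
occurrence: the first `M` blocks, of total length `M k K`, contain exactly `M k` occurrences, and
the counting function is monotone, so the frequency is `1 / K`.
-/

open Finset Filter Topology

theorem sum_range_mul_eq_sum_sum {M : Type*} [AddCommMonoid M] (g : ℕ → M) (a b : ℕ) :
    ∑ i ∈ range (a * b), g i = ∑ m ∈ range a, ∑ s ∈ range b, g (m * b + s) := by
  induction a with
  | zero => simp
  | succ a ih => rw [Nat.succ_mul, sum_range_add, ih, sum_range_succ]

lemma card_filter_range_add_mod (K c : ℕ) (q : ℕ → Prop) [DecidablePred q] :
    #{x ∈ range K | q ((x + c) % K)} = #{x ∈ range K | q x} := by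
  rcases Nat.eq_zero_or_pos K with rfl | hK
  · simp
  set σ : ℕ → ℕ := fun x => (x + c) % K
  have hinj : Set.InjOn σ (range K) := fun x hx y hy hxy => by
    have := Nat.ModEq.add_right_cancel' c hxy
    rwa [Nat.ModEq, Nat.mod_eq_of_lt (mem_range.1 hx), Nat.mod_eq_of_lt (mem_range.1 hy)] at this
  have himage : (range K).image σ = range K :=
    eq_of_subset_of_card_le (fun y hy => by
      obtain ⟨x, -, rfl⟩ := mem_image.1 hy; exact mem_range.2 (Nat.mod_lt _ hK))
      (card_image_of_injOn hinj).ge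
  rw [← card_image_of_injOn (hinj.mono (filter_subset _ _)), ← filter_image, himage]

lemma card_filter_mod_eq_and_div_eq {P Q A B : ℕ} (hA : A < P) (hB : B < Q) :
    #{y ∈ range (P * Q) | y % P = A ∧ y / P = B} = 1 := by
  have hP : 0 < P := Nat.zero_lt_of_lt hA
  rw [card_eq_one]
  refine ⟨A + P * B, ext fun y => ?_⟩
  rw [mem_filter, mem_range, mem_singleton, and_comm (a := y % P = A), Nat.div_mod_unique hP]
  constructor
  · rintro ⟨-, h, -⟩; exact h.symm
  · rintro rfl
    refine ⟨?_, rfl, hA⟩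
    calc A + P * B < P * (B + 1) := by rw [mul_add, mul_one]; omega
      _ ≤ P * Q := Nat.mul_le_mul_left P hB

lemma card_filter_mod_eq_and_succ_mod_div_eq {P Q A B : ℕ} (hA : A < P) (hB : B < Q) :
    #{x ∈ range (P * Q) | x % P = A ∧ (x + 1) % (P * Q) / P = B} = 1 := by
  have hP : 0 < P := Nat.zero_lt_of_lt hA
  have hshift : ∀ x, x % P = A ↔ (x + 1) % (P * Q) % P = (A + 1) % P := fun x => by
    rw [Nat.mod_mod_of_dvd _ (dvd_mul_right P Q)]
    conv_lhs => rw [← Nat.mod_eq_of_lt hA]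
    exact ⟨fun h => Nat.ModEq.add_right 1 h, Nat.ModEq.add_right_cancel' 1⟩
  simp_rw [hshift]
  rw [card_filter_range_add_mod (P * Q) 1 (fun y => y % P = (A + 1) % P ∧ y / P = B)]
  exact card_filter_mod_eq_and_div_eq (Nat.mod_lt _ hP) hB

theorem tendsto_div_of_monotone_of_mul_eq {g : ℕ → ℕ} (hg : Monotone g) {L c : ℕ}
    (hL : 0 < L) (h : ∀ M, g (M * L) = M * c) :
    Tendsto (fun m => (g m : ℝ) / m) atTop (𝓝 (c / L)) := by
  have hL' : (0 : ℝ) < L := by exact_mod_cast hL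
  have hbound : ∀ m : ℕ, 0 < m → |(g m : ℝ) / m - c / L| ≤ c / m := fun m hm => by
    have hm' : (0 : ℝ) < m := by exact_mod_cast hm
    have hlo : m / L * L ≤ m := Nat.div_mul_le_self m L
    have hhi : m < (m / L + 1) * L := by
      rw [add_mul, one_mul]; have := Nat.div_add_mod m L; have := Nat.mod_lt m hL; lia
    have hglo : (m / L : ℕ) * c ≤ g m := h (m / L) ▸ hg hlo
    have hghi : g m ≤ (m / L + 1) * c := h (m / L + 1) ▸ hg hhi.le
    have hlo' : ((m / L : ℕ) : ℝ) * L ≤ m := by exact_mod_cast hlo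
    have hhi' : (m : ℝ) < ((m / L : ℕ) + 1) * L := by exact_mod_cast hhi
    have hglo' : ((m / L : ℕ) : ℝ) * c ≤ g m := by exact_mod_cast hglo
    have hghi' : (g m : ℝ) ≤ ((m / L : ℕ) + 1) * c := by exact_mod_cast hghi
    have hc : (0 : ℝ) ≤ c := Nat.cast_nonneg c
    have key : |(g m : ℝ) * L - m * c| ≤ c * L :=
      abs_sub_le_iff.2 ⟨by nlinarith, by nlinarith⟩
    rw [div_sub_div _ _ hm'.ne' hL'.ne', abs_div, abs_of_pos (mul_pos hm' hL'),
      div_le_div_iff₀ (mul_pos hm' hL') hm']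
    nlinarith
  rw [tendsto_iff_norm_sub_tendsto_zero]
  refine squeeze_zero' (Eventually.of_forall fun m => norm_nonneg _) ?_
    (tendsto_const_div_atTop_nhds_zero_nat (c : ℝ))
  filter_upwards [eventually_gt_atTop 0] with m hm using hbound m hm

def ofDigitsBE (N : ℕ) (e : ℕ → ℕ) : ℕ → ℕ
  | 0 => 0
  | p + 1 => ofDigitsBE N e p * N + e p

lemma ofDigitsBE_lt {N : ℕ} {e : ℕ → ℕ} {p : ℕ} (he : ∀ s < p, e s < N) :
    ofDigitsBE N e p < N ^ p := by
  induction p with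
  | zero => simp [ofDigitsBE]
  | succ p ih =>
    have hV : ofDigitsBE N e p + 1 ≤ N ^ p := ih fun s hs => he s (by omega)
    calc ofDigitsBE N e p * N + e p < (ofDigitsBE N e p + 1) * N := by
          have := he p (by omega); nlinarith
      _ ≤ N ^ (p + 1) := by rw [pow_succ]; exact Nat.mul_le_mul_right N hV

lemma digits_eq_iff_mod_eq_ofDigitsBE {N : ℕ} {e : ℕ → ℕ} {p : ℕ}
    (he : ∀ s < p, e s < N) (x : ℕ) :
    (∀ s < p, x / N ^ (p - 1 - s) % N = e s) ↔ x % N ^ p = ofDigitsBE N e p := by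
  induction p generalizing x with
  | zero => simp [ofDigitsBE, Nat.mod_one]
  | succ p ih =>
    have hN : 0 < N := Nat.zero_lt_of_lt (he p (by omega))
    have hsplit : (∀ s < p + 1, x / N ^ (p + 1 - 1 - s) % N = e s) ↔
        (∀ s < p, x / N / N ^ (p - 1 - s) % N = e s) ∧ x % N = e p := by
      simp only [Nat.forall_lt_succ_right, Nat.div_div_eq_div_mul, ← pow_succ']
      refine and_congr (forall₂_congr fun s hs => ?_) (by simp)
      rw [show p + 1 - 1 - s = p - 1 - s + 1 by omega]
    rw [hsplit, ih (fun s hs => he s (by omega)), pow_succ', ← Nat.mod_mul_right_div_self,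
      ← Nat.mod_mul_right_mod x N, Nat.div_mod_unique hN, ofDigitsBE]
    constructor
    · rintro ⟨h, -⟩; rw [← h]; ring
    · intro h; rw [h]; exact ⟨by ring, he p (by omega)⟩

lemma factor_eq_iff {N k : ℕ} {a c w : ℕ → ℕ}
    (ha : ∀ p, ∀ s < k, a (p * k + s) = c p / N ^ (k - 1 - s) % N)
    (hw : ∀ s < k, w s < N) {r : ℕ} (hr : r < k) {p : ℕ} (hc : c (p + 1) < N ^ k) :
    (∀ s < k, a (p * k + r + s) = w s) ↔
      c p % N ^ (k - r) = ofDigitsBE N w (k - r) ∧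
        c (p + 1) / N ^ (k - r) = ofDigitsBE N (fun s => w (k - r + s)) r := by
  have hk : k = k - r + r := by omega
  have hhigh : c (p + 1) / N ^ (k - r) < N ^ r := by
    rwa [Nat.div_lt_iff_lt_mul (Nat.pow_pos (Nat.zero_lt_of_lt (hw 0 (by omega)))), ← pow_add,
      Nat.add_sub_cancel' hr.le]
  rw [hk, forall_lt_add_iff_lt_left, ← hk,
    ← digits_eq_iff_mod_eq_ofDigitsBE (fun s hs => hw s (by omega)),
    ← Nat.mod_eq_of_lt hhigh,
    ← digits_eq_iff_mod_eq_ofDigitsBE (fun s hs => hw (k - r + s) (by omega))]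
  refine and_congr (forall₂_congr fun s hs => ?_) (forall₂_congr fun s hs => ?_)
  · rw [add_assoc, ha p (r + s) (by omega), show k - 1 - (r + s) = k - r - 1 - s by omega]
  · rw [show p * k + r + (k - r + s) = (p + 1) * k + s by
        rw [add_mul, one_mul]; omega, ha (p + 1) s (by omega), Nat.div_div_eq_div_mul,
      ← pow_add, show k - 1 - s = k - r + (r - 1 - s) by omega]

/-- With `K = (n + 1) ^ k`, the `p`-th length-`k` word of `W (f 0) W (f 1) ⋯` is the one with
index `blockWordIndex K f p`. -/
def blockWordIndex (K : ℕ) (f : ℕ → ℕ) (p : ℕ) : ℕ := (f (p / K) + p % K) % K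

/-- At a block boundary both sides vanish: the next block starts with word `f (m + 1) < P`, and
the last word of block `m` is followed cyclically by word `f m < P`. -/
lemma blockWordIndex_succ_div {K P : ℕ} {f : ℕ → ℕ} (hf : ∀ m, f m < P) (p : ℕ) :
    blockWordIndex K f (p + 1) / P = (blockWordIndex K f p + 1) % K / P := by
  rcases Nat.eq_zero_or_pos K with rfl | hK
  · simp [blockWordIndex, add_assoc]
  have hp := Nat.div_add_mod p K
  have ht := Nat.mod_lt p hK
  unfold blockWordIndex
  rw [Nat.mod_add_mod]
  rcases Nat.lt_or_ge (p % K + 1) K with hlt | hge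
  · have hdiv : (p + 1) / K = p / K := by
      conv_lhs => rw [← hp, add_assoc, Nat.mul_add_div hK, Nat.div_eq_of_lt hlt, add_zero]
    have hmod : (p + 1) % K = p % K + 1 := by
      conv_lhs => rw [← hp, add_assoc, Nat.mul_add_mod, Nat.mod_eq_of_lt hlt]
    rw [hdiv, hmod, add_assoc]
  · have hp1 : p + 1 = K * (p / K + 1) := by rw [mul_add, mul_one]; omega
    have hsmall : ∀ m, f m % K / P = 0 := fun m =>
      Nat.div_eq_of_lt ((Nat.mod_le _ _).trans_lt (hf m))
    rw [hp1, Nat.mul_div_cancel_left _ hK, Nat.mul_mod_right, add_zero,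
      show f (p / K) + p % K + 1 = f (p / K) + K by omega, Nat.add_mod_right, hsmall, hsmall]

lemma blockWordIndex_mul_add {K t : ℕ} (f : ℕ → ℕ) (m : ℕ) (ht : t < K) :
    blockWordIndex K f (m * K + t) = (t + f m) % K := by
  have hK : 0 < K := Nat.zero_lt_of_lt ht
  rw [blockWordIndex, mul_comm, Nat.mul_add_div hK, Nat.div_eq_of_lt ht, add_zero,
    Nat.mul_add_mod, Nat.mod_eq_of_lt ht, add_comm]

section Counting

variable {N k : ℕ} {f a w : ℕ → ℕ} (hf : ∀ m, f m < N) (hw : ∀ s < k, w s < N)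
  (ha : ∀ p, ∀ s < k, a (p * k + s) = blockWordIndex (N ^ k) f p / N ^ (k - 1 - s) % N)
include hf hw ha

lemma card_filter_block_factor_eq_one (m : ℕ) {r : ℕ} (hr : r < k) :
    #{t ∈ range (N ^ k) | ∀ s < k, a ((m * N ^ k + t) * k + r + s) = w s} = 1 := by
  have hN : 0 < N := Nat.zero_lt_of_lt (hw 0 (by omega))
  have hNP : N ≤ N ^ (k - r) := Nat.le_self_pow (by omega) N
  have hPQ : N ^ (k - r) * N ^ r = N ^ k := by rw [← pow_add, Nat.sub_add_cancel hr.le]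
  have hiff : ∀ t ∈ range (N ^ k), (∀ s < k, a ((m * N ^ k + t) * k + r + s) = w s) ↔
      (t + f m) % N ^ k % N ^ (k - r) = ofDigitsBE N w (k - r) ∧
        ((t + f m) % N ^ k + 1) % N ^ k / N ^ (k - r) =
          ofDigitsBE N (fun s => w (k - r + s)) r := fun t ht => by
    rw [factor_eq_iff ha hw hr (Nat.mod_lt _ (Nat.pow_pos hN)),
      blockWordIndex_succ_div (fun m => (hf m).trans_le hNP),
      blockWordIndex_mul_add f m (mem_range.1 ht)]
  rw [filter_congr hiff, card_filter_range_add_mod (N ^ k) (f m)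
    (fun x => x % N ^ (k - r) = _ ∧ (x + 1) % N ^ k / N ^ (k - r) = _), ← hPQ]
  exact card_filter_mod_eq_and_succ_mod_div_eq (ofDigitsBE_lt fun s hs => hw s (by omega))
    (ofDigitsBE_lt fun s hs => hw (k - r + s) (by omega))

lemma card_filter_factor_range_mul_eq (M : ℕ) :
    #{j ∈ range (M * (k * N ^ k)) | ∀ s < k, a (j + s) = w s} = M * k := by
  rw [card_filter, mul_comm k, ← mul_assoc, sum_range_mul_eq_sum_sum, sum_range_mul_eq_sum_sum]
  calc _ = ∑ m ∈ range M, ∑ r ∈ range k,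
        #{t ∈ range (N ^ k) | ∀ s < k, a ((m * N ^ k + t) * k + r + s) = w s} := by
          simp only [card_filter]; exact sum_congr rfl fun m _ => sum_comm
    _ = M * k := by
      rw [sum_congr rfl fun m _ => sum_congr rfl fun r hr =>
        card_filter_block_factor_eq_one hf hw ha m (mem_range.1 hr)]
      simp

end Counting

theorem champernowne_blocks_k_simply_normal_general (n k : ℕ) (hk : 1 ≤ k)
    (W : ℕ → ℕ → ℕ)
    (hW : ∀ i j, W i j = (((i + j / k) % (n + 1) ^ k) / (n + 1) ^ (k - 1 - j % k)) % (n + 1))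
    (f : ℕ → ℕ) (hf : ∀ m, f m ≤ n)
    (a : ℕ → ℕ)
    (ha : ∀ j, a j = W (f (j / (k * (n + 1) ^ k))) (j % (k * (n + 1) ^ k)))
    (w : ℕ → ℕ) (hw : ∀ t < k, w t ≤ n) :
    Filter.Tendsto
      (fun m => (((Finset.range m).filter (fun j => ∀ t < k, a (j + t) = w t)).card : ℝ) / m)
      Filter.atTop (nhds (1 / ((n : ℝ) + 1) ^ k)) := by
  have ha' : ∀ p, ∀ s < k,
      a (p * k + s) = blockWordIndex ((n + 1) ^ k) f p / (n + 1) ^ (k - 1 - s) % (n + 1) :=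
    fun p s hs => by
      have hdiv : (p * k + s) / k = p := by
        rw [Nat.add_comm, Nat.add_mul_div_right _ _ (by omega), Nat.div_eq_of_lt hs, zero_add]
      have hmod : (p * k + s) % k = s := by rw [Nat.mul_add_mod', Nat.mod_eq_of_lt hs]
      rw [ha, hW, Nat.mod_mul, ← Nat.div_div_eq_div_mul, hdiv, hmod,
        Nat.add_mul_div_left _ _ (by omega), Nat.div_eq_of_lt hs, zero_add,
        Nat.add_mul_mod_self_left, Nat.mod_eq_of_lt hs, blockWordIndex]
  have hmono : Monotone fun m => #{j ∈ range m | ∀ t < k, a (j + t) = w t} := fun _ _ h =>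
    card_le_card (filter_subset_filter _ (range_subset_range.2 h))
  have hcount := card_filter_factor_range_mul_eq (fun m => Nat.lt_succ_of_le (hf m))
    (fun s hs => Nat.lt_succ_of_le (hw s hs)) ha'
  convert tendsto_div_of_monotone_of_mul_eq hmono (by positivity) hcount using 2
  push_cast
  field_simp

/-- every infinite concatenation of blocks from `{W₀, …, W_n}` is `k`-simply
normal.  Here `W i` is the concatenation of all `(n+1)^k` words of length `k` over `{0,…,n}`
in lexicographic order starting cyclically from the `i`-th word: its `j`-th letter
(`j < k·(n+1)^k`) is letter `j % k` of word number `(i + j/k) mod (n+1)^k`.  The sequence `a`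
is a concatenation of blocks `W (f 0) W (f 1) ⋯` with each `f m ≤ n`.  Conclusion: for every
word `w` of length `k`, the frequency of occurrences of `w` in `a` equals `(n+1)^{-k}`. -/
theorem champernowne_blocks_k_simply_normal (n k : ℕ) (hn : 1 ≤ n) (hk : 1 ≤ k)
    (W : ℕ → ℕ → ℕ)
    (hW : ∀ i j, W i j = (((i + j / k) % (n + 1) ^ k) / (n + 1) ^ (k - 1 - j % k)) % (n + 1))
    (f : ℕ → ℕ) (hf : ∀ m, f m ≤ n)
    (a : ℕ → ℕ)
    (ha : ∀ j, a j = W (f (j / (k * (n + 1) ^ k))) (j % (k * (n + 1) ^ k)))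
    (w : ℕ → ℕ) (hw : ∀ t < k, w t ≤ n) :
    Filter.Tendsto
      (fun m => (((Finset.range m).filter (fun j => ∀ t < k, a (j + t) = w t)).card : ℝ) / m)
      Filter.atTop (nhds (1 / ((n : ℝ) + 1) ^ k)) :=
  champernowne_blocks_k_simply_normal_general n k hk W hW f hf a ha w hw
end

section
/- Let p_0 = 0 ∈ ℝ^d and let p_1, ..., p_d be the standard unit basis vectors of ℝ^d. For contraction ratios λ_0, ..., λ_d ∈ (0,1), define S_i(x) = λ_i x + (1−λ_i) p_i. If λ_0 + λ_1 + ⋯ + λ_d ≥ d, then the simplex Δ = {x ∈ ℝ^d : x_j ≥ 0 for all j, Σ_j x_j ≤ 1} satisfies Δ = ⋃_{i=0}^d S_i(Δ). In particular the attractor of the IFS {S_i}_{i=0}^d equals Δ = conv{p_0, ..., p_d}. -/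
/-!
Dropping the first coordinate maps the standard simplex of `ℝ^(d+1)` linearly onto `Δ` and its
vertices onto `p 0, …, p d`; hence `Δ = conv{p_i}`, `Δ` is convex and every `S_i(Δ) ⊆ Δ`.
Conversely let `x ∈ Δ`. If `∑ x_j ≤ λ_0` then `x = S_0(x / λ_0)`. Otherwise
`∑_j (1 - λ_{j+1}) ≤ λ_0 < ∑_j x_j`, so some `x_j > 1 - λ_{j+1}`, and this is exactly what makes
`S_{j+1}⁻¹(x)` have nonnegative coordinates.
-/

open Set

def cornerSimplex (ι : Type*) [Fintype ι] : Set (ι → ℝ) :=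
  {x | (∀ j, 0 ≤ x j) ∧ ∑ j, x j ≤ 1}

theorem image_funLeft_succ_stdSimplex (n : ℕ) :
    LinearMap.funLeft ℝ ℝ Fin.succ '' stdSimplex ℝ (Fin (n + 1)) = cornerSimplex (Fin n) := by
  ext x
  constructor
  · rintro ⟨y, ⟨hy0, hy1⟩, rfl⟩
    refine ⟨fun j => hy0 j.succ, ?_⟩
    rw [Fin.sum_univ_succ] at hy1
    simp only [LinearMap.funLeft_apply]
    linarith [hy0 0]
  · rintro ⟨hx0, hx1⟩
    refine ⟨Fin.cons (1 - ∑ j, x j) x, ⟨fun i => ?_, ?_⟩, rfl⟩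
    · cases i using Fin.cases with
      | zero => simpa using hx1
      | succ j => simpa using hx0 j
    · simp [Fin.sum_univ_succ]

theorem convexHull_range_cons_zero_single (n : ℕ) :
    convexHull ℝ (range (Fin.cons 0 fun j : Fin n => Pi.single j 1)) = cornerSimplex (Fin n) := by
  have hvert : (Fin.cons 0 fun j : Fin n => Pi.single j 1 : Fin (n + 1) → Fin n → ℝ) =
      LinearMap.funLeft ℝ ℝ Fin.succ ∘ fun i => Pi.single i 1 := by
    ext i j
    cases i using Fin.cases with
    | zero => simp
    | succ k => simp [Pi.single_apply]
  rw [hvert, range_comp, ← LinearMap.image_convexHull, convexHull_rangle_single_eq_stdSimplex,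
    image_funLeft_succ_stdSimplex]

theorem convex_cornerSimplex (n : ℕ) : Convex ℝ (cornerSimplex (Fin n)) :=
  image_funLeft_succ_stdSimplex n ▸ (convex_stdSimplex ℝ _).linear_image _

section

variable {ι : Type*} [Fintype ι]

theorem inv_smul_mem_cornerSimplex {x : ι → ℝ} (hx : x ∈ cornerSimplex ι) {μ : ℝ} (hμ : 0 < μ)
    (hxμ : ∑ j, x j ≤ μ) : μ⁻¹ • x ∈ cornerSimplex ι := by
  refine ⟨fun j => smul_nonneg (inv_nonneg.2 hμ.le) (hx.1 j), ?_⟩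
  simp only [Pi.smul_apply, smul_eq_mul, ← Finset.mul_sum]
  rwa [inv_mul_le_iff₀ hμ, mul_one]

theorem inv_smul_sub_single_mem_cornerSimplex [DecidableEq ι] {x : ι → ℝ}
    (hx : x ∈ cornerSimplex ι) {ν : ℝ} (hν : 0 < ν) {j : ι} (hxj : 1 - ν ≤ x j) :
    ν⁻¹ • (x - (1 - ν) • Pi.single j 1) ∈ cornerSimplex ι := by
  refine ⟨fun k => smul_nonneg (inv_nonneg.2 hν.le) ?_, ?_⟩
  · rcases eq_or_ne k j with rfl | hkj
    · simpa using hxj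
    · simpa [hkj] using hx.1 k
  · simp only [Pi.smul_apply, Pi.sub_apply, smul_eq_mul, ← Finset.mul_sum,
      Finset.sum_sub_distrib, Finset.sum_pi_single', Finset.mem_univ, if_true]
    rw [inv_mul_le_iff₀ hν]
    linarith [hx.2]

theorem exists_one_sub_lt_of_card_le {x ν : ι → ℝ} {μ : ℝ}
    (hsum : (Fintype.card ι : ℝ) ≤ μ + ∑ j, ν j) (hx : μ < ∑ j, x j) : ∃ j, 1 - ν j < x j := by
  obtain ⟨j, -, hj⟩ := Finset.exists_lt_of_sum_lt (s := Finset.univ) (f := fun j => 1 - ν j)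
    (g := x) (by simp only [Finset.sum_sub_distrib, Finset.sum_const, Finset.card_univ,
      nsmul_eq_mul, mul_one]; linarith)
  exact ⟨j, hj⟩

end

theorem cornerSimplex_subset_iUnion_homothety {n : ℕ} {lam : Fin (n + 1) → ℝ}
    (hlam : ∀ i, 0 < lam i) (hsum : (n : ℝ) ≤ ∑ i, lam i) :
    cornerSimplex (Fin n) ⊆ ⋃ i, (fun y => lam i • y + (1 - lam i) •
      (Fin.cons 0 fun j : Fin n => Pi.single j 1 : Fin (n + 1) → Fin n → ℝ) i) ''
        cornerSimplex (Fin n) := by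
  intro x hx
  simp only [mem_iUnion, mem_image]
  by_cases hx0 : ∑ j, x j ≤ lam 0
  · refine ⟨0, _, inv_smul_mem_cornerSimplex hx (hlam 0) hx0, ?_⟩
    simp [smul_inv_smul₀ (hlam 0).ne']
  · rw [Fin.sum_univ_succ] at hsum
    obtain ⟨j, hj⟩ := exists_one_sub_lt_of_card_le (by simpa using hsum) (not_le.1 hx0)
    refine ⟨j.succ, _, inv_smul_sub_single_mem_cornerSimplex hx (hlam j.succ) hj.le, ?_⟩
    simp [smul_inv_smul₀ (hlam j.succ).ne']

theorem simplex_no_holes_general (d : ℕ)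
    (p : Fin (d + 1) → Fin d → ℝ)
    (hp : ∀ i j, p i j = if (i : ℕ) = (j : ℕ) + 1 then 1 else 0)
    (lam : Fin (d + 1) → ℝ) (hlam : ∀ i, lam i ∈ Set.Ioo (0 : ℝ) 1)
    (hsum : (d : ℝ) ≤ ∑ i, lam i)
    (Δ : Set (Fin d → ℝ))
    (hΔ : Δ = {x | (∀ j, 0 ≤ x j) ∧ ∑ j, x j ≤ 1}) :
    Δ = (⋃ i, (fun x => lam i • x + (1 - lam i) • p i) '' Δ) ∧
      Δ = convexHull ℝ (Set.range p) := by
  have hp_cons : p = Fin.cons 0 fun j => Pi.single j 1 := by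
    ext i j
    cases i using Fin.cases with
    | zero => simp [hp]
    | succ k => simp [hp, Pi.single_apply, eq_comm, Fin.val_inj]
  change Δ = cornerSimplex (Fin d) at hΔ
  subst hΔ hp_cons
  have hhull := convexHull_range_cons_zero_single d
  refine ⟨subset_antisymm (cornerSimplex_subset_iUnion_homothety (fun i => (hlam i).1) hsum) ?_,
    hhull.symm⟩
  refine iUnion_subset fun i => ?_
  rintro _ ⟨y, hy, rfl⟩
  exact convex_cornerSimplex d hy (hhull ▸ subset_convexHull ℝ _ (mem_range_self i))
    (hlam i).1.le (sub_nonneg.2 (hlam i).2.le) (add_sub_cancel _ _)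

/-- with `p 0 = 0` and `p i = eᵢ` the standard basis vectors of `ℝ^d`, and
`S_i(x) = λ_i x + (1-λ_i) p_i` with `λ_i ∈ (0,1)`, if `λ_0 + ⋯ + λ_d ≥ d` then the simplex
`Δ = {x : xⱼ ≥ 0, Σ xⱼ ≤ 1}` satisfies `Δ = ⋃ᵢ S_i(Δ)`; in particular the attractor of the
IFS equals `Δ = conv{p_0, …, p_d}`. -/
theorem simplex_no_holes (d : ℕ) (hd : 1 ≤ d)
    (p : Fin (d + 1) → Fin d → ℝ)
    (hp : ∀ i j, p i j = if (i : ℕ) = (j : ℕ) + 1 then 1 else 0)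
    (lam : Fin (d + 1) → ℝ) (hlam : ∀ i, lam i ∈ Set.Ioo (0 : ℝ) 1)
    (hsum : (d : ℝ) ≤ ∑ i, lam i)
    (Δ : Set (Fin d → ℝ))
    (hΔ : Δ = {x | (∀ j, 0 ≤ x j) ∧ ∑ j, x j ≤ 1}) :
    Δ = (⋃ i, (fun x => lam i • x + (1 - lam i) • p i) '' Δ) ∧
      Δ = convexHull ℝ (Set.range p) :=
  simplex_no_holes_general d p hp lam hlam hsum Δ hΔ
end

section
/- Let F = {p_0, ..., p_n} ⊂ ℝ^d (n ≥ d) and define S_i(x) = λ_i x + (1−λ_i) p_i with λ_i ∈ (0,1). If for every subset A ⊆ {0,...,n} of cardinality d+1 one has Σ_{i∈A} λ_i ≥ d, then the attractor X of the IFS {S_i}_{i=0}^n equals conv(F), the convex hull of F. -/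
/-!
Each homothety `S_i` has ratio `λ_i < 1`, so if a bounded set `A` is covered by the sets `S_i(A)`
and a nonempty closed set `C` is mapped into itself by every `S_i`, then the supremum over `A`
of the distance to `C` is at most `max λ_i` times itself, hence zero, and `A ⊆ C`. Applied to
`A = X`, `C = conv F` this gives `X ⊆ conv F`. Conversely, by Carathéodory a point `x` of
`conv F` is a convex combination `∑ μ_j p_j` supported on some `d + 1` indices `A`; since
`∑_{j ∈ A} (1 - λ_j) ≤ 1 = ∑_{j ∈ A} μ_j`, some `μ_i ≥ 1 - λ_i`, and moving the excess weight
`1 - λ_i` off `p_i` writes `x = S_i(y)` with `y ∈ conv F`. So `conv F ⊆ ⋃ S_i(conv F)`, and the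
same contraction argument with `A = conv F`, `C = X` gives `conv F ⊆ X`.
-/

open Finset Metric Set Module
open scoped NNReal

section Contraction

variable {α ι : Type*} [PseudoMetricSpace α]

theorem infDist_le_mul_of_lipschitzWith_of_mapsTo {f : α → α} {K : ℝ≥0} {C : Set α}
    (hf : LipschitzWith K f) (hC : MapsTo f C C) (x : α) :
    infDist (f x) C ≤ K * infDist x C := by
  rcases C.eq_empty_or_nonempty with rfl | hCne
  · simp
  have : Nonempty C := hCne.to_subtype
  calc infDist (f x) C ≤ ⨅ c : C, K * dist x c :=
        le_ciInf fun c => (infDist_le_dist_of_mem (hC c.2)).trans (hf.dist_le_mul x c)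
    _ = K * infDist x C := by
      rw [infDist_eq_iInf]; exact (Real.mul_iInf_of_nonneg K.2 _).symm

theorem subset_of_subset_iUnion_image_of_lipschitzWith {f : ι → α → α} {K : ℝ≥0} (hK : K < 1)
    (hf : ∀ i, LipschitzWith K (f i)) {A C : Set α} (hA : Bornology.IsBounded A)
    (hC : IsClosed C) (hCne : C.Nonempty) (hAf : A ⊆ ⋃ i, f i '' A)
    (hCf : ∀ i, MapsTo (f i) C C) : A ⊆ C := by
  rcases A.eq_empty_or_nonempty with rfl | hAne
  · exact empty_subset C
  set D := sSup ((infDist · C) '' A)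
  have hbdd : BddAbove ((infDist · C) '' A) :=
    ((lipschitz_infDist_pt C).isBounded_image hA).bddAbove
  have hle_D : ∀ x ∈ A, infDist x C ≤ D := fun x hx => le_csSup hbdd (mem_image_of_mem _ hx)
  have hle_KD : ∀ x ∈ A, infDist x C ≤ K * D := by
    intro x hx
    obtain ⟨i, y, hy, rfl⟩ := mem_iUnion.1 (hAf hx)
    exact (infDist_le_mul_of_lipschitzWith_of_mapsTo (hf i) (hCf i) y).trans
      (mul_le_mul_of_nonneg_left (hle_D y hy) K.2)
  have hD : D ≤ K * D := csSup_le (hAne.image _) (forall_mem_image.2 hle_KD)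
  have hD0 : 0 ≤ D := infDist_nonneg.trans (hle_D _ hAne.some_mem)
  have hD_eq : D = 0 := by
    have : (K : ℝ) < 1 := hK
    nlinarith
  intro x hx
  exact (hC.mem_iff_infDist_zero hCne).2 (le_antisymm (hD_eq ▸ hle_D x hx) infDist_nonneg)

end Contraction

theorem exists_lipschitzWith_lt_one_smul_add {ι E : Type*} [Fintype ι]
    [SeminormedAddCommGroup E] [NormedSpace ℝ E] (c : ι → ℝ) (b : ι → E) (hc : ∀ i, |c i| < 1) :
    ∃ K < 1, ∀ i, LipschitzWith K fun x => c i • x + b i := by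
  refine ⟨univ.sup fun i => ‖c i‖₊, (Finset.sup_lt_iff zero_lt_one).2 fun i _ => hc i, ?_⟩
  intro i
  refine LipschitzWith.of_dist_le_mul fun x y => ?_
  rw [dist_add_right, dist_smul₀]
  gcongr
  exact_mod_cast Finset.le_sup (f := fun i => ‖c i‖₊) (mem_univ i)

section ConvexHull

variable {ι E : Type*} [AddCommGroup E] [Module ℝ E] {p : ι → E}

/-- Carathéodory's theorem for an indexed family of points. -/
theorem exists_finset_card_le_finrank_of_mem_convexHull_range [FiniteDimensional ℝ E] {x : E}
    (hx : x ∈ convexHull ℝ (range p)) :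
    ∃ u : Finset ι, #u ≤ finrank ℝ E + 1 ∧ ∃ w : ι → ℝ,
      (∀ j ∈ u, 0 ≤ w j) ∧ ∑ j ∈ u, w j = 1 ∧ ∑ j ∈ u, w j • p j = x := by
  classical
  rw [convexHull_eq_union] at hx
  obtain ⟨t, htp, hai, hxt⟩ := by simpa only [mem_iUnion, exists_prop] using hx
  obtain ⟨u, -, hinj, rfl⟩ :=
    Finset.exists_subset_injOn_image_eq_of_surjOn univ t (by rwa [SurjOn, image_univ])
  refine ⟨u, ?_, ?_⟩
  · calc #u = #(u.image p) := (card_image_of_injOn hinj).symm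
      _ ≤ finrank ℝ (vectorSpan ℝ (range ((↑) : u.image p → E))) + 1 := by
        simpa using hai.card_le_finrank_succ
      _ ≤ finrank ℝ E + 1 := by gcongr; exact Submodule.finrank_le _
  · obtain ⟨w, hw0, hw1, hwx⟩ := Finset.mem_convexHull'.1 hxt
    rw [sum_image hinj] at hw1 hwx
    exact ⟨w ∘ p, fun j hj => hw0 _ (mem_image_of_mem p hj), hw1, hwx⟩

theorem exists_sub_le_of_sum_eq_one {d : ℕ} {u A : Finset ι} {μ lam : ι → ℝ} (huA : u ⊆ A)
    (hA : #A = d + 1) (hμ : ∑ j ∈ u, μ j = 1) (hlam : ∀ j, lam j ≤ 1)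
    (hsum : (d : ℝ) ≤ ∑ j ∈ A, lam j) : ∃ i ∈ u, 1 - lam i ≤ μ i := by
  by_contra! h
  have hu : u.Nonempty := nonempty_of_sum_ne_zero (hμ ▸ one_ne_zero)
  have : ∑ j ∈ u, μ j < ∑ j ∈ A, (1 - lam j) :=
    (sum_lt_sum_of_nonempty hu h).trans_le
      (sum_le_sum_of_subset_of_nonneg huA fun j _ _ => sub_nonneg.2 (hlam j))
  rw [sum_sub_distrib, sum_const, hA, hμ] at this
  norm_num at this
  linarith

theorem exists_mem_convexHull_smul_add_eq {u : Finset ι} {μ : ι → ℝ} {i : ι} {c : ℝ}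
    (hμ0 : ∀ j ∈ u, 0 ≤ μ j) (hμ1 : ∑ j ∈ u, μ j = 1) (hi : i ∈ u) (hc : 0 < c)
    (hμi : 1 - c ≤ μ i) :
    ∃ y ∈ convexHull ℝ (range p), c • y + (1 - c) • p i = ∑ j ∈ u, μ j • p j := by
  classical
  set ν : ι → ℝ := fun j => (μ j - if j = i then 1 - c else 0) / c
  have hν0 : ∀ j ∈ u, 0 ≤ ν j := by
    intro j hj
    refine div_nonneg ?_ hc.le
    split_ifs with h
    · subst h; linarith
    · simpa using hμ0 j hj
  have hν1 : ∑ j ∈ u, ν j = 1 := by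
    rw [← sum_div, sum_sub_distrib, hμ1, sum_ite_eq', if_pos hi, div_eq_one_iff_eq hc.ne']
    ring
  refine ⟨∑ j ∈ u, ν j • p j, ?_, ?_⟩
  · rw [← centerMass_eq_of_sum_1 _ _ hν1]
    exact u.centerMass_mem_convexHull hν0 (by rw [hν1]; exact one_pos)
      fun j _ => mem_range_self j
  · simp only [ν, smul_sum, smul_smul, mul_div_cancel₀ _ hc.ne', sub_smul, sum_sub_distrib,
      ite_smul, zero_smul, sum_ite_eq', if_pos hi]
    abel

theorem convexHull_range_subset_iUnion_image [Fintype ι] [FiniteDimensional ℝ E] {d : ℕ}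
    (hE : finrank ℝ E ≤ d) (hd : d + 1 ≤ Fintype.card ι) {lam : ι → ℝ}
    (hlam : ∀ i, lam i ∈ Set.Ioc 0 1)
    (hsum : ∀ A : Finset ι, #A = d + 1 → (d : ℝ) ≤ ∑ i ∈ A, lam i) :
    convexHull ℝ (range p) ⊆
      ⋃ i, (fun x => lam i • x + (1 - lam i) • p i) '' convexHull ℝ (range p) := by
  intro x hx
  obtain ⟨u, hu, μ, hμ0, hμ1, rfl⟩ := exists_finset_card_le_finrank_of_mem_convexHull_range hx
  obtain ⟨A, huA, -, hA⟩ :=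
    Finset.exists_subsuperset_card_eq (n := d + 1) (subset_univ u) (by omega) (by rwa [card_univ])
  obtain ⟨i, hi, hμi⟩ := exists_sub_le_of_sum_eq_one huA hA hμ1 (fun j => (hlam j).2) (hsum A hA)
  obtain ⟨y, hy, hyx⟩ := exists_mem_convexHull_smul_add_eq (p := p) hμ0 hμ1 hi (hlam i).1 hμi
  exact mem_iUnion.2 ⟨i, y, hy, hyx⟩

end ConvexHull

theorem attractor_eq_convexHull_general (d n : ℕ) (hdn : d ≤ n)
    (p : Fin (n + 1) → EuclideanSpace ℝ (Fin d))
    (lam : Fin (n + 1) → ℝ) (hlam : ∀ i, lam i ∈ Set.Ioo (0 : ℝ) 1)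
    (hsum : ∀ A : Finset (Fin (n + 1)), A.card = d + 1 → (d : ℝ) ≤ ∑ i ∈ A, lam i)
    (X : Set (EuclideanSpace ℝ (Fin d))) (hX : X.Nonempty) (hXc : IsCompact X)
    (hfix : X = ⋃ i, (fun x => lam i • x + (1 - lam i) • p i) '' X) :
    X = convexHull ℝ (Set.range p) := by
  obtain ⟨K, hK, hS⟩ := exists_lipschitzWith_lt_one_smul_add lam (fun i => (1 - lam i) • p i)
    fun i => abs_lt.2 ⟨by linarith [(hlam i).1], (hlam i).2⟩
  have hconv : IsCompact (convexHull ℝ (range p)) := (finite_range p).isCompact_convexHull ℝ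
  have hconv_maps : ∀ i, MapsTo (fun x => lam i • x + (1 - lam i) • p i)
      (convexHull ℝ (range p)) (convexHull ℝ (range p)) := fun i _ hx =>
    convex_convexHull ℝ _ hx (subset_convexHull ℝ _ (mem_range_self i)) (hlam i).1.le
      (sub_nonneg.2 (hlam i).2.le) (add_sub_cancel _ _)
  have hX_maps : ∀ i, MapsTo (fun x => lam i • x + (1 - lam i) • p i) X X := fun i x hx => by
    rw [hfix]
    exact mem_iUnion.2 ⟨i, mem_image_of_mem _ hx⟩
  have hconv_cover := convexHull_range_subset_iUnion_image (p := p) finrank_euclideanSpace_fin.le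
    (by simpa using hdn) (fun i => Ioo_subset_Ioc_self (hlam i)) hsum
  exact (subset_of_subset_iUnion_image_of_lipschitzWith hK hS hXc.isBounded hconv.isClosed
      ⟨p 0, subset_convexHull ℝ _ (mem_range_self 0)⟩ hfix.le hconv_maps).antisymm
    (subset_of_subset_iUnion_image_of_lipschitzWith hK hS hconv.isBounded hXc.isClosed hX
      hconv_cover hX_maps)

/-- for `F = {p_0,…,p_n} ⊂ ℝ^d` not contained in any `(d-1)`-dimensional affine
subspace (i.e. affinely spanning) and `S_i(x) = λ_i x + (1-λ_i) p_i` with `λ_i ∈ (0,1)`: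
if `Σ_{i∈A} λ_i ≥ d` for every `A ⊆ {0,…,n}` of cardinality `d+1`, then the attractor `X`
of the IFS equals `conv(F)`. -/
theorem attractor_eq_convexHull (d n : ℕ) (hd : 1 ≤ d) (hdn : d ≤ n)
    (p : Fin (n + 1) → EuclideanSpace ℝ (Fin d))
    (hspan : affineSpan ℝ (Set.range p) = ⊤)
    (lam : Fin (n + 1) → ℝ) (hlam : ∀ i, lam i ∈ Set.Ioo (0 : ℝ) 1)
    (hsum : ∀ A : Finset (Fin (n + 1)), A.card = d + 1 → (d : ℝ) ≤ ∑ i ∈ A, lam i)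
    (X : Set (EuclideanSpace ℝ (Fin d))) (hX : X.Nonempty) (hXc : IsCompact X)
    (hfix : X = ⋃ i, (fun x => lam i • x + (1 - lam i) • p i) '' X) :
    X = convexHull ℝ (Set.range p) :=
  attractor_eq_convexHull_general d n hdn p lam hlam hsum X hX hXc hfix
end

section
/- Let d = 1, F = {p_0, ..., p_n} ⊂ ℝ with p_0 = min F and p_n = max F, p_0 < p_n, and S_i(x) = λ_i x + (1−λ_i) p_i with λ_i ∈ (0,1). If λ_0 + λ_n ≥ 1, then the attractor of {S_i}_{i=0}^n equals the interval [p_0, p_n]. -/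
/-!
Both inclusions are instances of one fact about contractions: a compact set `A` covered by its
images `⋃ S i '' A` lies in every nonempty closed set `B` that each `S i` maps into itself.
For `X ⊆ [p 0, p n]` take `B` the interval, which every `S i` maps into itself since `p i` lies in
it. For `[p 0, p n] ⊆ X` take `A` the interval, which `λ 0 + λ n ≥ 1` makes the union of the
overlapping pieces `S 0 [p 0, p n] = [p 0, p 0 + λ 0 (p n - p 0)]` and
`S n [p 0, p n] = [p n - λ n (p n - p 0), p n]`.
-/

open Set Metric
open scoped NNReal

theorem LipschitzWith.infDist_le_mul {α β : Type*} [PseudoMetricSpace α] [PseudoMetricSpace β]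
    {f : α → β} {K : ℝ≥0} (hf : LipschitzWith K f) {s : Set α} {t : Set β}
    (hst : MapsTo f s t) (hs : s.Nonempty) (x : α) :
    infDist (f x) t ≤ K * infDist x s := by
  have key : ∀ y ∈ s, infDist (f x) t ≤ K * dist x y := fun y hy =>
    (infDist_le_dist_of_mem (hst hy)).trans (hf.dist_le_mul x y)
  rcases eq_or_ne K 0 with rfl | hK
  · obtain ⟨y, hy⟩ := hs
    simpa using key y hy
  · have hK : (0 : ℝ) < K := NNReal.coe_pos.2 (pos_iff_ne_zero.2 hK)
    rw [← div_le_iff₀' hK]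
    exact (le_infDist hs).2 fun y hy => (div_le_iff₀' hK).2 (key y hy)

/-- The distance to `B` attains its maximum on `A` at some `y = S i z` with `z ∈ A`; since `S i`
maps `B` into itself, that maximum is at most `K i` times itself, hence zero. -/
theorem subset_of_subset_iUnion_image_of_mapsTo {ι α : Type*} [PseudoMetricSpace α]
    {S : ι → α → α} {K : ι → ℝ≥0} (hK : ∀ i, K i < 1) (hS : ∀ i, LipschitzWith (K i) (S i))
    {A B : Set α} (hA : IsCompact A) (hAS : A ⊆ ⋃ i, S i '' A)
    (hB : IsClosed B) (hBne : B.Nonempty) (hBS : ∀ i, MapsTo (S i) B B) : A ⊆ B := by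
  rcases A.eq_empty_or_nonempty with rfl | hAne
  · exact empty_subset B
  obtain ⟨y, hyA, hmax⟩ := hA.exists_isMaxOn hAne (continuous_infDist_pt B).continuousOn
  suffices infDist y B ≤ 0 from fun x hx =>
    (hB.mem_iff_infDist_zero hBne).2 (le_antisymm ((hmax hx).trans this) infDist_nonneg)
  obtain ⟨i, z, hzA, rfl⟩ : ∃ i, ∃ z ∈ A, S i z = y := by simpa using hAS hyA
  have hcontr : infDist (S i z) B ≤ K i * infDist (S i z) B :=
    ((hS i).infDist_le_mul (hBS i) hBne z).trans
      (mul_le_mul_of_nonneg_left (hmax hzA) (K i).2)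
  nlinarith [(hK i : (K i : ℝ) < 1), infDist_nonneg (x := S i z) (s := B)]

theorem lipschitzWith_homothety (c r : ℝ) :
    LipschitzWith ‖r‖₊ (fun x : ℝ => r * x + (1 - r) * c) :=
  LipschitzWith.of_dist_le_mul fun x y => by
    simp only [Real.dist_eq, coe_nnnorm, Real.norm_eq_abs, ← abs_mul]
    exact le_of_eq (congrArg _ (by ring))

theorem mapsTo_homothety_Icc {a b c r : ℝ} (hc : c ∈ Icc a b) (hr : r ∈ Icc (0 : ℝ) 1) :
    MapsTo (fun x : ℝ => r * x + (1 - r) * c) (Icc a b) (Icc a b) := fun _ hx =>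
  convex_Icc a b hx hc hr.1 (sub_nonneg.2 hr.2) (add_sub_cancel r 1)

theorem Icc_subset_homothety_image_union {a b r s : ℝ} (hr : 0 < r) (hs : 0 < s)
    (hrs : 1 ≤ r + s) :
    Icc a b ⊆ (fun x => r * x + (1 - r) * a) '' Icc a b ∪
      (fun x => s * x + (1 - s) * b) '' Icc a b := by
  rw [image_affine_Icc' hr, image_affine_Icc' hs]
  rintro y ⟨hay, hyb⟩
  by_cases hy : y ≤ r * b + (1 - r) * a
  · exact Or.inl ⟨by linarith, hy⟩
  · exact Or.inr ⟨by nlinarith, by linarith⟩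

theorem attractor_eq_interval_general (n : ℕ)
    (p : Fin (n + 1) → ℝ)
    (hmin : ∀ i, p 0 ≤ p i) (hmax : ∀ i, p i ≤ p (Fin.last n))
    (lam : Fin (n + 1) → ℝ) (hlam : ∀ i, lam i ∈ Set.Ioo (0 : ℝ) 1)
    (hsum : 1 ≤ lam 0 + lam (Fin.last n))
    (X : Set ℝ) (hX : X.Nonempty) (hXc : IsCompact X)
    (hfix : X = ⋃ i, (fun x => lam i * x + (1 - lam i) * p i) '' X) :
    X = Set.Icc (p 0) (p (Fin.last n)) := by
  have hK : ∀ i, ‖lam i‖₊ < 1 := fun i => by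
    rw [← NNReal.coe_lt_coe, coe_nnnorm, Real.norm_eq_abs, abs_lt]
    exact ⟨by linarith [(hlam i).1], (hlam i).2⟩
  have hS i := lipschitzWith_homothety (p i) (lam i)
  have hcover : Icc (p 0) (p (Fin.last n)) ⊆
      ⋃ i, (fun x => lam i * x + (1 - lam i) * p i) '' Icc (p 0) (p (Fin.last n)) :=
    (Icc_subset_homothety_image_union (hlam 0).1 (hlam (Fin.last n)).1 hsum).trans
      (union_subset (subset_iUnion_of_subset 0 subset_rfl)
        (subset_iUnion_of_subset (Fin.last n) subset_rfl))
  refine Subset.antisymm ?_ ?_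
  · exact subset_of_subset_iUnion_image_of_mapsTo hK hS hXc hfix.le isClosed_Icc
      (nonempty_Icc.2 (hmin _)) fun i =>
        mapsTo_homothety_Icc ⟨hmin i, hmax i⟩ (Ioo_subset_Icc_self (hlam i))
  · exact subset_of_subset_iUnion_image_of_mapsTo hK hS isCompact_Icc hcover hXc.isClosed hX
      fun i x hx => hfix.ge (mem_iUnion_of_mem i (mem_image_of_mem _ hx))

/-- in dimension 1, with `p 0 = min F`, `p n = max F`, `p 0 < p n`, contraction
ratios `λ_i ∈ (0,1)` and `λ_0 + λ_n ≥ 1`, the attractor of the IFS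
`S_i(x) = λ_i x + (1-λ_i) p_i` equals the interval `[p 0, p n]`. -/
theorem attractor_eq_interval (n : ℕ) (hn : 1 ≤ n)
    (p : Fin (n + 1) → ℝ)
    (hmin : ∀ i, p 0 ≤ p i) (hmax : ∀ i, p i ≤ p (Fin.last n)) (hlt : p 0 < p (Fin.last n))
    (lam : Fin (n + 1) → ℝ) (hlam : ∀ i, lam i ∈ Set.Ioo (0 : ℝ) 1)
    (hsum : 1 ≤ lam 0 + lam (Fin.last n))
    (X : Set ℝ) (hX : X.Nonempty) (hXc : IsCompact X)
    (hfix : X = ⋃ i, (fun x => lam i * x + (1 - lam i) * p i) '' X) :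
    X = Set.Icc (p 0) (p (Fin.last n)) :=
  attractor_eq_interval_general n p hmin hmax lam hlam hsum X hX hXc hfix
end

section
/- Let λ ∈ [d/(d+1), 1) and let Φ be the homogeneous IFS on ℝ^d with maps S_i(x) = λx + (1−λ)e_i for i = 0, ..., d, where e_0 = 0 and e_1, ..., e_d are the standard basis vectors; its attractor is the simplex X = {x : x_i ≥ 0, Σ x_i ≤ 1}. Then for every x in the interior of X, there exists a finite word a over {0,...,d} such that (T_{a_{|a|}} ∘ ⋯ ∘ T_{a_1})(x) ∈ (0, 1−λ]^d, where T_i(x) = (x − (1−λ)e_i)/λ, and moreover all intermediate images of x remain in X. -/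
/-!
Greedy descent: while some coordinate `y j` exceeds `1 - λ`, apply `T_{j+1}`. This keeps all
coordinates positive, and since `Σ (T_{j+1} y) = (Σ y - (1 - λ)) / λ`, it lowers the coordinate
sum by at least `(1 - λ)(1 - s₀)/λ > 0` as long as that sum stays below `s₀ = Σ x < 1`.
A positive sum can only drop by a fixed amount finitely often, so the greedy walk ends in the
cube `(0, 1 - λ]^d`.
-/

open Filter Topology

theorem List.exists_foldl_mem_of_descent {α β : Type*} (f : α → β → α) (S C : Set α)
    (V : α → ℝ) {δ : ℝ} (hδ : 0 < δ) (hV : ∀ y ∈ S, 0 ≤ V y)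
    (hstep : ∀ y ∈ S, y ∉ C → ∃ i, f y i ∈ S ∧ V (f y i) ≤ V y - δ) {y : α} (hy : y ∈ S) :
    ∃ w : List β, (∀ l ≤ w.length, (w.take l).foldl f y ∈ S) ∧ w.foldl f y ∈ C := by
  obtain ⟨n, hn⟩ := exists_nat_gt (V y / δ)
  rw [div_lt_iff₀ hδ] at hn
  induction n generalizing y with
  | zero => exact absurd (hV y hy) (by simpa using hn)
  | succ n ih =>
    by_cases hyC : y ∈ C
    · exact ⟨[], by simpa using hy, hyC⟩
    obtain ⟨i, hiS, hiV⟩ := hstep y hy hyC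
    obtain ⟨w, hwS, hwC⟩ := ih hiS (by push_cast at hn; linarith)
    refine ⟨i :: w, fun l hl => ?_, hwC⟩
    cases l with
    | zero => simpa using hy
    | succ l => exact hwS l (by simpa using hl)

theorem exists_pos_add_smul_mem_of_mem_interior {E : Type*} [TopologicalSpace E]
    [AddCommGroup E] [Module ℝ E] [ContinuousAdd E] [ContinuousSMul ℝ E] {A : Set E} {x : E}
    (hx : x ∈ interior A) (v : E) : ∃ t > (0 : ℝ), x + t • v ∈ A := by
  have hlim : Tendsto (fun t : ℝ => x + t • v) (𝓝[>] 0) (𝓝 x) := by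
    have hcont : Continuous fun t : ℝ => x + t • v := by fun_prop
    simpa using (hcont.tendsto 0).mono_left nhdsWithin_le_nhds
  obtain ⟨t, htA, ht⟩ :=
    ((hlim.eventually (mem_interior_iff_mem_nhds.mp hx)).and self_mem_nhdsWithin).exists
  exact ⟨t, ht, htA⟩

section CornerSimplex

variable {ι : Type*}

theorem pos_and_sum_lt_one_of_mem_interior [Fintype ι] [DecidableEq ι] [Nonempty ι] {x : ι → ℝ}
    (hx : x ∈ interior {x : ι → ℝ | (∀ i, 0 ≤ x i) ∧ ∑ i, x i ≤ 1}) :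
    (∀ i, 0 < x i) ∧ ∑ i, x i < 1 := by
  refine ⟨fun i => ?_, ?_⟩
  · obtain ⟨t, ht, hmem, -⟩ := exists_pos_add_smul_mem_of_mem_interior hx (-Pi.single i 1)
    have := hmem i
    simp only [Pi.add_apply, Pi.smul_apply, Pi.neg_apply, Pi.single_eq_same, smul_eq_mul] at this
    linarith
  · obtain ⟨t, ht, -, hsum⟩ := exists_pos_add_smul_mem_of_mem_interior hx (fun _ => 1)
    have hcard : (0 : ℝ) < Fintype.card ι := by exact_mod_cast Fintype.card_pos
    simp only [Pi.add_apply, Pi.smul_apply, smul_eq_mul, mul_one, Finset.sum_add_distrib,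
      Finset.sum_const, Finset.card_univ, nsmul_eq_mul] at hsum
    nlinarith

/-- `T_i` for the map `S_i y = λ y + (1 - λ) c` with fixed point `c`. -/
noncomputable def expandingMap (lam : ℝ) (c y : ι → ℝ) : ι → ℝ := lam⁻¹ • (y - (1 - lam) • c)

variable [DecidableEq ι] {lam : ℝ} {y : ι → ℝ} {j : ι}

theorem expandingMap_single_pos (hlam : 0 < lam) (hy : ∀ i, 0 < y i) (hj : 1 - lam < y j)
    (i : ι) : 0 < expandingMap lam (Pi.single j 1) y i := by
  unfold expandingMap
  rcases eq_or_ne i j with rfl | hij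
  · simpa using mul_pos (inv_pos.mpr hlam) (sub_pos.mpr hj)
  · simpa [hij] using mul_pos (inv_pos.mpr hlam) (hy i)

variable [Fintype ι]

theorem sum_expandingMap_single (lam : ℝ) (y : ι → ℝ) (j : ι) :
    ∑ i, expandingMap lam (Pi.single j 1) y i = lam⁻¹ * (∑ i, y i - (1 - lam)) := by
  simp only [expandingMap, Pi.smul_apply, Pi.sub_apply, smul_eq_mul, ← Finset.mul_sum,
    Finset.sum_sub_distrib, Finset.sum_pi_single', Finset.mem_univ, if_true,
    mul_one]

theorem sum_expandingMap_single_le {s₀ : ℝ} (hlam : lam ∈ Set.Ioo 0 1) (hys : ∑ i, y i ≤ s₀) :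
    ∑ i, expandingMap lam (Pi.single j 1) y i ≤ ∑ i, y i - (1 - lam) * (1 - s₀) / lam := by
  obtain ⟨hlam0, hlam1⟩ := hlam
  rw [sum_expandingMap_single, inv_mul_le_iff₀ hlam0, mul_sub, mul_div_cancel₀ _ hlam0.ne']
  nlinarith

end CornerSimplex

/-- for `λ ∈ [d/(d+1), 1)` and the homogeneous IFS on the simplex
`X = {x : xᵢ ≥ 0, Σ xᵢ ≤ 1}` with fixed points `e_0 = 0, e_1, …, e_d`, every `x` in the
interior of `X` admits a finite word `w` over `{0,…,d}` such that all intermediate images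
of `x` under the expanding maps `T_i(y) = (y - (1-λ)e_i)/λ` stay in `X` and the final image
lies in the cube `(0, 1-λ]^d`. -/
theorem greedy_into_cube (d : ℕ) (hd : 1 ≤ d)
    (lam : ℝ) (hlam : lam ∈ Set.Ico ((d : ℝ) / (d + 1)) 1)
    (e : Fin (d + 1) → Fin d → ℝ)
    (he : ∀ i j, e i j = if (i : ℕ) = (j : ℕ) + 1 then 1 else 0)
    (X : Set (Fin d → ℝ))
    (hXdef : X = {x | (∀ i, 0 ≤ x i) ∧ ∑ i, x i ≤ 1})
    (x : Fin d → ℝ) (hx : x ∈ interior X) :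
    ∃ w : List (Fin (d + 1)),
      (∀ l ≤ w.length,
        (w.take l).foldl (fun y i => lam⁻¹ • (y - (1 - lam) • e i)) x ∈ X) ∧
      ∀ j : Fin d,
        (w.foldl (fun y i => lam⁻¹ • (y - (1 - lam) • e i)) x) j ∈ Set.Ioc 0 (1 - lam) := by
  have : Nonempty (Fin d) := ⟨⟨0, hd⟩⟩
  subst hXdef
  obtain ⟨hxpos, hxsum⟩ := pos_and_sum_lt_one_of_mem_interior hx
  have hlam' : lam ∈ Set.Ioo 0 1 := ⟨lt_of_lt_of_le (by positivity) hlam.1, hlam.2⟩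
  have he_succ (j : Fin d) : e j.succ = Pi.single j 1 := by
    ext k
    simp [he, Pi.single_apply, Fin.ext_iff, eq_comm]
  have hδ : 0 < (1 - lam) * (1 - ∑ i, x i) / lam :=
    div_pos (mul_pos (sub_pos.2 hlam'.2) (sub_pos.2 hxsum)) hlam'.1
  let S := {y : Fin d → ℝ | (∀ i, 0 < y i) ∧ ∑ i, y i ≤ ∑ i, x i}
  obtain ⟨w, hwS, hwC⟩ := List.exists_foldl_mem_of_descent
    (fun y i => expandingMap lam (e i) y) S {y | ∀ j, y j ∈ Set.Ioc 0 (1 - lam)}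
    (fun y => ∑ i, y i) hδ
    (fun y hy => Finset.sum_nonneg fun i _ => (hy.1 i).le)
    (fun y ⟨hypos, hysum⟩ hyC => by
      obtain ⟨j, hj⟩ : ∃ j, 1 - lam < y j := by simpa [hypos] using hyC
      have hdesc := sum_expandingMap_single_le (j := j) hlam' hysum
      refine ⟨j.succ, ⟨fun i => ?_, ?_⟩, ?_⟩ <;> simp only [he_succ]
      · exact expandingMap_single_pos hlam'.1 hypos hj i
      · linarith
      · exact hdesc)
    (show x ∈ S from ⟨hxpos, le_rfl⟩)
  exact ⟨w, fun l hl => ⟨fun i => (hwS l hl).1 i |>.le, (hwS l hl).2.trans hxsum.le⟩, hwC⟩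
end

section
/- Let λ ∈ (2^{−1/(2d)}, 1) and suppose that the finite-sum set {Σ_{j=0}^m a_j λ^{−d j} : m ∈ ℕ, a_j ∈ {0,1}} is ε'-dense in [C_1, ∞) for every ε' > 0 (for some C_1 = C_1(ε') > 0). Then for every ε > 0 there exists C > 0 such that the set Z^d(λ) = {(1−λ) Σ_{j=1}^m e_{a_j} λ^{−j} : m ∈ ℕ, (a_j) ∈ {0,1,...,d}^m} is ε-dense in the region ⋂_{i=1}^d {x ∈ ℝ^d : x_i ≥ C}. -/
/-!
Scale coordinate `q` of the target point by `λ^{q+1} / (1 - λ)` and approximate it by a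
one-dimensional subset sum `Σ_{k ∈ s_q} λ^{-dk}`. Interleaving the `d` digit sets, with digit
`k` of coordinate `q` placed at position `dk + q`, produces a single word in `{0, …, d}` whose
sum in `Z^d(λ)` has exactly these approximations as coordinates, since
`(1 - λ) λ^{-(dk + q + 1)} = (1 - λ) λ^{-(q+1)} · λ^{-dk}`.
-/

open Finset

lemma sum_mul_eq_sum_filter_of_le_one (t : Finset ℕ) (a : ℕ → ℕ) (r : ℕ → ℝ)
    (ha : ∀ j, a j ≤ 1) :
    ∑ j ∈ t, (a j : ℝ) * r j = ∑ j ∈ t with a j = 1, r j := by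
  rw [sum_filter]
  refine sum_congr rfl fun j _ => ?_
  rcases Nat.le_one_iff_eq_zero_or_eq_one.1 (ha j) with h | h <;> simp [h]

lemma exists_finset_abs_sub_sum_le {y ε : ℝ} {r : ℕ → ℝ}
    (h : ∃ m : ℕ, ∃ a : ℕ → ℕ, (∀ j, a j ≤ 1) ∧ |y - ∑ j ∈ range (m + 1), (a j : ℝ) * r j| ≤ ε) :
    ∃ z ∈ Set.range fun s : Finset ℕ => ∑ k ∈ s, r k, |y - z| ≤ ε := by
  obtain ⟨m, a, ha, hy⟩ := h
  rw [sum_mul_eq_sum_filter_of_le_one _ _ _ ha] at hy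
  exact ⟨_, ⟨_, rfl⟩, hy⟩

lemma exists_abs_sub_mul_le {Z : Set ℝ} {C₁ ε κ K x : ℝ} (hκ : 0 < κ) (hκK : κ ≤ K)
    (hC₁ : 0 ≤ C₁) (hZ : ∀ y, C₁ ≤ y → ∃ z ∈ Z, |y - z| ≤ ε) (hx : K * C₁ ≤ x) :
    ∃ z ∈ Z, |x - κ * z| ≤ K * ε := by
  have hκx : κ * C₁ ≤ x := (mul_le_mul_of_nonneg_right hκK hC₁).trans hx
  obtain ⟨z, hzZ, hz⟩ := hZ (x / κ) ((le_div_iff₀ hκ).2 (by linarith))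
  refine ⟨z, hzZ, ?_⟩
  rw [show x - κ * z = κ * (x / κ - z) by field_simp, abs_mul, abs_of_pos hκ]
  exact mul_le_mul hκK hz (abs_nonneg _) (hκ.le.trans hκK)

lemma dist_le_sqrt_card_mul {ι : Type*} [Fintype ι] {x y : EuclideanSpace ℝ ι} {δ : ℝ}
    (hδ : 0 ≤ δ) (h : ∀ i, |x i - y i| ≤ δ) : dist x y ≤ √(Fintype.card ι) * δ := by
  calc dist x y = √(∑ i, dist (x i) (y i) ^ 2) := EuclideanSpace.dist_eq x y
    _ ≤ √(∑ _ : ι, δ ^ 2) := by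
      gcongr with i
      exact h i
    _ = √(Fintype.card ι) * δ := by
      simp [Real.sqrt_mul, Real.sqrt_sq hδ]

lemma dist_le_of_forall_abs_sub_le {ι : Type*} [Fintype ι] {x y : EuclideanSpace ℝ ι} {ε : ℝ}
    (hε : 0 ≤ ε) (h : ∀ i, |x i - y i| ≤ ε / (Fintype.card ι + 1)) : dist x y ≤ ε := by
  have hsqrt : √(Fintype.card ι : ℝ) ≤ Fintype.card ι + 1 :=
    (Real.sqrt_le_left (by positivity)).2 (by nlinarith)
  calc dist x y ≤ √(Fintype.card ι) * (ε / (Fintype.card ι + 1)) :=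
        dist_le_sqrt_card_mul (by positivity) h
    _ ≤ (Fintype.card ι + 1) * (ε / (Fintype.card ι + 1)) := by gcongr
    _ = ε := mul_div_cancel₀ ε (by positivity)

/-- The word whose letter at position `d * k + q` is `q + 1` if `k ∈ s q`, and `0` otherwise. -/
def interleave (d : ℕ) (s : Fin d → Finset ℕ) (j : ℕ) : Fin (d + 1) :=
  if h : j % d < d then
    if j / d ∈ s ⟨j % d, h⟩ then Fin.succ ⟨j % d, h⟩ else 0
  else 0

lemma interleave_val_eq_succ_iff {d : ℕ} (s : Fin d → Finset ℕ) (j : ℕ) (q : Fin d) :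
    (interleave d s j : ℕ) = q + 1 ↔ j % d = q ∧ j / d ∈ s q := by
  have hj : j % d < d := Nat.mod_lt j q.pos
  rw [interleave, dif_pos hj]
  split_ifs with hs
  · constructor
    · rintro h
      obtain rfl : (⟨j % d, hj⟩ : Fin d) = q := Fin.ext (by simpa using h)
      exact ⟨rfl, hs⟩
    · rintro ⟨h, -⟩
      simp [h]
  · simp only [Fin.val_zero, (Nat.succ_ne_zero _).symm, false_iff]
    rintro ⟨h, hq⟩
    obtain rfl : (⟨j % d, hj⟩ : Fin d) = q := Fin.ext h
    exact hs hq

lemma sum_interleave_apply {d N : ℕ} (e : Fin (d + 1) → EuclideanSpace ℝ (Fin d))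
    (he : ∀ i j, e i j = if (i : ℕ) = (j : ℕ) + 1 then 1 else 0)
    (s : Fin d → Finset ℕ) (hN : ∀ q, s q ⊆ range N) (c : ℕ → ℝ) (q : Fin d) :
    (∑ j ∈ range (d * N), c j • e (interleave d s j)) q = ∑ k ∈ s q, c (d * k + q) := by
  have hd : 0 < d := q.pos
  simp only [WithLp.ofLp_sum, WithLp.ofLp_smul, Finset.sum_apply, Pi.smul_apply, smul_eq_mul, he,
    interleave_val_eq_succ_iff, mul_ite, mul_one, mul_zero]
  rw [← sum_filter]
  symm
  have hdiv (k : ℕ) : (d * k + q) / d = k := by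
    rw [Nat.mul_add_div hd, Nat.div_eq_of_lt q.2, add_zero]
  have hmod (k : ℕ) : (d * k + q) % d = q := by
    rw [Nat.mul_add_mod, Nat.mod_eq_of_lt q.2]
  refine sum_nbij' (fun k => d * k + q) (fun j => j / d) ?_ ?_ ?_ ?_ (fun _ _ => rfl)
  · intro k hk
    have hkN : k + 1 ≤ N := mem_range.1 (hN q hk)
    simp only [mem_filter, mem_range, hdiv]
    refine ⟨?_, hmod k, hk⟩
    calc d * k + q < d * (k + 1) := by rw [mul_add_one]; exact Nat.add_lt_add_left q.2 _
      _ ≤ d * N := Nat.mul_le_mul_left d hkN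
  · intro j hj
    exact (mem_filter.1 hj).2.2
  · intro k _
    exact hdiv k
  · intro j hj
    simp only [mem_filter] at hj
    rw [← hj.2.1, Nat.div_add_mod]

/-- The letter at position `j` of a word in `Z^d(λ)` carries the weight
`letterWeight lam (j + 1)`. -/
noncomputable def letterWeight (lam : ℝ) (n : ℕ) : ℝ := (1 - lam) * (lam ^ n)⁻¹

section letterWeight

variable {lam : ℝ}

lemma letterWeight_pos (hlam0 : 0 < lam) (hlam1 : lam < 1) (n : ℕ) : 0 < letterWeight lam n := by
  have := sub_pos.2 hlam1
  unfold letterWeight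
  positivity

lemma letterWeight_mono (hlam0 : 0 < lam) (hlam1 : lam < 1) {m n : ℕ} (h : m ≤ n) :
    letterWeight lam m ≤ letterWeight lam n :=
  mul_le_mul_of_nonneg_left
    (inv_anti₀ (pow_pos hlam0 n) (pow_le_pow_of_le_one hlam0.le hlam1.le h)) (sub_pos.2 hlam1).le

lemma letterWeight_add (m n : ℕ) :
    letterWeight lam (m + n) = letterWeight lam m * (lam ^ n)⁻¹ := by
  rw [letterWeight, letterWeight, pow_add, mul_inv, mul_assoc]

lemma sum_letterWeight_interleave_apply {d N : ℕ} (e : Fin (d + 1) → EuclideanSpace ℝ (Fin d))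
    (he : ∀ i j, e i j = if (i : ℕ) = (j : ℕ) + 1 then 1 else 0)
    (s : Fin d → Finset ℕ) (hN : ∀ q, s q ⊆ range N) (q : Fin d) :
    (∑ j ∈ range (d * N), letterWeight lam (j + 1) • e (interleave d s j)) q
      = letterWeight lam (q + 1) * ∑ k ∈ s q, (lam ^ (d * k))⁻¹ := by
  rw [sum_interleave_apply e he s hN, mul_sum]
  refine sum_congr rfl fun k _ => ?_
  rw [← letterWeight_add]
  congr 1
  ring

end letterWeight

theorem Z_d_lambda_dense_general (d : ℕ) (lam : ℝ)
    (hlam : lam ∈ Set.Ioo ((2 : ℝ) ^ (-(1 / (2 * (d : ℝ))))) 1)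
    (e : Fin (d + 1) → EuclideanSpace ℝ (Fin d))
    (he : ∀ i j, e i j = if (i : ℕ) = (j : ℕ) + 1 then 1 else 0)
    (hdense1 : ∀ ε' > (0 : ℝ), ∃ C₁ > (0 : ℝ), ∀ y : ℝ, C₁ ≤ y →
      ∃ m : ℕ, ∃ a : ℕ → ℕ, (∀ j, a j ≤ 1) ∧
        |y - ∑ j ∈ Finset.range (m + 1), (a j : ℝ) * (lam ^ (d * j))⁻¹| ≤ ε') :
    ∀ ε > (0 : ℝ), ∃ C > (0 : ℝ), ∀ x : EuclideanSpace ℝ (Fin d), (∀ i, C ≤ x i) →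
      ∃ m : ℕ, ∃ a : ℕ → Fin (d + 1),
        dist x (∑ j ∈ Finset.range m, ((1 - lam) * (lam ^ (j + 1))⁻¹) • e (a j)) ≤ ε := by
  obtain ⟨hlam0, hlam1⟩ : 0 < lam ∧ lam < 1 := ⟨(by positivity : (0 : ℝ) < _).trans hlam.1, hlam.2⟩
  intro ε hε
  set δ := ε / (d + 1)
  have hK := letterWeight_pos hlam0 hlam1 d
  obtain ⟨C₁, hC₁, hZ⟩ := hdense1 (δ / letterWeight lam d) (by positivity)
  refine ⟨letterWeight lam d * C₁, by positivity, fun x hx => ?_⟩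
  have hcoord (q : Fin d) :
      ∃ s : Finset ℕ, |x q - letterWeight lam (q + 1) * ∑ k ∈ s, (lam ^ (d * k))⁻¹| ≤ δ := by
    obtain ⟨z, ⟨s, rfl⟩, hz⟩ := exists_abs_sub_mul_le (letterWeight_pos hlam0 hlam1 _)
      (letterWeight_mono hlam0 hlam1 q.2) hC₁.le
      (fun y hy => exists_finset_abs_sub_sum_le (hZ y hy)) (hx q)
    exact ⟨s, hz.trans_eq (mul_div_cancel₀ δ hK.ne')⟩
  choose s hs using hcoord
  obtain ⟨N, hN⟩ := exists_nat_subset_range (univ.biUnion s)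
  refine ⟨d * N, interleave d s, dist_le_of_forall_abs_sub_le hε.le fun q => ?_⟩
  have hsum := sum_letterWeight_interleave_apply (lam := lam) e he s
    (fun q => (subset_biUnion_of_mem s (mem_univ q)).trans hN) q
  rw [Fintype.card_fin]
  unfold letterWeight at hsum
  rw [hsum]
  exact hs q

/-- let `λ ∈ (2^{-1/(2d)}, 1)` and assume the one-dimensional finite-sum set
`{Σ_{j=0}^m a_j λ^{-dj} : a_j ∈ {0,1}}` is `ε'`-dense in `[C₁, ∞)` for every `ε' > 0`
(for some `C₁ = C₁(ε') > 0`).  Then for every `ε > 0` there is `C > 0` such that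
`Z^d(λ) = {(1-λ) Σ_{j=1}^m e_{a_j} λ^{-j}}` is `ε`-dense in `⋂ᵢ {x : xᵢ ≥ C}`, where
`e_0 = 0` and `e_1, …, e_d` are the standard basis vectors. -/
theorem Z_d_lambda_dense (d : ℕ) (hd : 1 ≤ d) (lam : ℝ)
    (hlam : lam ∈ Set.Ioo ((2 : ℝ) ^ (-(1 / (2 * (d : ℝ))))) 1)
    (e : Fin (d + 1) → EuclideanSpace ℝ (Fin d))
    (he : ∀ i j, e i j = if (i : ℕ) = (j : ℕ) + 1 then 1 else 0)
    (hdense1 : ∀ ε' > (0 : ℝ), ∃ C₁ > (0 : ℝ), ∀ y : ℝ, C₁ ≤ y →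
      ∃ m : ℕ, ∃ a : ℕ → ℕ, (∀ j, a j ≤ 1) ∧
        |y - ∑ j ∈ Finset.range (m + 1), (a j : ℝ) * (lam ^ (d * j))⁻¹| ≤ ε') :
    ∀ ε > (0 : ℝ), ∃ C > (0 : ℝ), ∀ x : EuclideanSpace ℝ (Fin d), (∀ i, C ≤ x i) →
      ∃ m : ℕ, ∃ a : ℕ → Fin (d + 1),
        dist x (∑ j ∈ Finset.range m, ((1 - lam) * (lam ^ (j + 1))⁻¹) • e (a j)) ≤ ε :=
  Z_d_lambda_dense_general d lam hlam e he hdense1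
end

section
/- Let Φ be a homogeneous IFS on ℝ^d with attractor X and maps S_i(x) = λx + (1−λ)p_i, and T_i the inverse of S_i. If a ∈ D^ℕ is a universal coding of x (i.e., π(a) = x and every finite word over D occurs as a factor of a), then the orbit {(T_{a_j} ∘ ⋯ ∘ T_{a_1})(x) : j ≥ 1} is dense in X. -/
/-!
With `S_i y = lam • y + (1 - lam) • p i`, the inverse maps only shift the coding: the orbit
points are `π(σ^j a)`. Any `z ∈ X` can be written `S_{b 0} ∘ ⋯ ∘ S_{b (m-1)} w` with `w ∈ X`,
and universality gives a `j` for which `σ^j a` begins with `b 0, …, b (m-1)`, so the orbit point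
is the image of another point of a bounded set under the same composition. That composition
contracts distances by `lam ^ m`, hence the orbit point is `O(lam ^ m)`-close to `z`.
-/

open Finset Metric Filter Topology

section HomogeneousIFS

variable {E ι : Type*} [NormedAddCommGroup E] [NormedSpace ℝ E] {lam : ℝ} {p : ι → E}

/-- `S_{b 0} ∘ ⋯ ∘ S_{b (m-1)}` in closed form, where `S_i y = lam • y + (1 - lam) • p i`. -/
def wordMap (lam : ℝ) (p : ι → E) (b : ℕ → ι) (m : ℕ) (w : E) : E :=
  ∑ k ∈ range m, ((1 - lam) * lam ^ k) • p (b k) + lam ^ m • w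

/-- The coding map `π`. -/
noncomputable def coding (lam : ℝ) (p : ι → E) (c : ℕ → ι) : E :=
  ∑' k, ((1 - lam) * lam ^ k) • p (c k)

theorem wordMap_congr {b b' : ℕ → ι} {m : ℕ} (h : ∀ k < m, b k = b' k) (w : E) :
    wordMap lam p b m w = wordMap lam p b' m w := by
  unfold wordMap
  congr 1
  exact sum_congr rfl fun k hk => by rw [h k (mem_range.1 hk)]

theorem wordMap_succ (b : ℕ → ι) (m : ℕ) (w : E) :
    wordMap lam p b (m + 1) w = wordMap lam p b m (lam • w + (1 - lam) • p (b m)) := by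
  rw [wordMap, wordMap, sum_range_succ, smul_add, smul_smul, smul_smul, ← pow_succ,
    mul_comm (lam ^ m)]
  abel

theorem dist_wordMap (hlam : 0 ≤ lam) (b : ℕ → ι) (m : ℕ) (w w' : E) :
    dist (wordMap lam p b m w) (wordMap lam p b m w') = lam ^ m * dist w w' := by
  rw [wordMap, wordMap, dist_add_left, dist_smul₀, Real.norm_of_nonneg (pow_nonneg hlam m)]

theorem exists_eq_wordMap_of_mem {X : Set E}
    (hX : X ⊆ ⋃ i, (fun y => lam • y + (1 - lam) • p i) '' X) {z : E} (hz : z ∈ X) :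
    ∀ m, ∃ b : ℕ → ι, ∃ w ∈ X, z = wordMap lam p b m w
  | 0 => by
    obtain ⟨i, -⟩ := Set.mem_iUnion.1 (hX hz)
    exact ⟨fun _ => i, z, hz, by simp [wordMap]⟩
  | m + 1 => by
    obtain ⟨b, w, hw, rfl⟩ := exists_eq_wordMap_of_mem hX hz m
    obtain ⟨i, w', hw', rfl⟩ := Set.mem_iUnion.1 (hX hw)
    refine ⟨Function.update b m i, w', hw', ?_⟩
    rw [wordMap_succ, Function.update_self]
    exact wordMap_congr (fun k hk => (Function.update_of_ne hk.ne _ _).symm) _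

theorem exists_shift_eqOn_of_universal {a : ℕ → ι}
    (huniv : ∀ b : List ι, ∃ m : ℕ, ∀ t : Fin b.length, a (m + t) = b.get t)
    (b : ℕ → ι) (m : ℕ) : ∃ j, ∀ k < m, a (k + (j + 1)) = b k := by
  -- the extra first letter makes the occurrence of `b` start at a positive index
  obtain ⟨j, hj⟩ := huniv (a 0 :: List.ofFn fun k : Fin m => b k)
  refine ⟨j, fun k hk => ?_⟩
  rw [show k + (j + 1) = j + (k + 1) by omega]
  simpa using hj ⟨k + 1, by simpa⟩

variable {M : ℝ} (hp : ∀ i, ‖p i‖ ≤ M)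
include hp

theorem norm_coding_term_le (h0 : 0 ≤ lam) (h1 : lam < 1) (c : ℕ → ι) (k : ℕ) :
    ‖((1 - lam) * lam ^ k) • p (c k)‖ ≤ (1 - lam) * M * lam ^ k := by
  have hc : 0 ≤ (1 - lam) * lam ^ k := mul_nonneg (sub_nonneg.2 h1.le) (pow_nonneg h0 k)
  rw [norm_smul, Real.norm_of_nonneg hc]
  exact (mul_le_mul_of_nonneg_left (hp _) hc).trans_eq (by ring)

theorem summable_coding [CompleteSpace E] (h0 : 0 ≤ lam) (h1 : lam < 1) (c : ℕ → ι) :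
    Summable fun k => ((1 - lam) * lam ^ k) • p (c k) :=
  .of_norm_bounded ((summable_geometric_of_lt_one h0 h1).mul_left _)
    (norm_coding_term_le hp h0 h1 c)

theorem norm_coding_le (h0 : 0 ≤ lam) (h1 : lam < 1) (c : ℕ → ι) : ‖coding lam p c‖ ≤ M := by
  have := tsum_of_norm_bounded ((hasSum_geometric_of_lt_one h0 h1).mul_left ((1 - lam) * M))
    (norm_coding_term_le hp h0 h1 c)
  rwa [mul_right_comm, mul_inv_cancel₀ (sub_ne_zero.2 h1.ne'), one_mul] at this

variable [CompleteSpace E]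

theorem coding_eq_wordMap (h0 : 0 ≤ lam) (h1 : lam < 1) (c : ℕ → ι) (m : ℕ) :
    coding lam p c = wordMap lam p c m (coding lam p fun k => c (k + m)) := by
  rw [coding, ← (summable_coding hp h0 h1 c).sum_add_tsum_nat_add m, wordMap, coding,
    ← (summable_coding hp h0 h1 _).tsum_const_smul]
  simp only [smul_smul, pow_add]
  congr 1
  exact tsum_congr fun k => by ring_nf

theorem inv_smul_coding_sub (h0 : 0 < lam) (h1 : lam < 1) (c : ℕ → ι) :
    lam⁻¹ • (coding lam p c - (1 - lam) • p (c 0)) = coding lam p fun k => c (k + 1) := by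
  rw [coding_eq_wordMap hp h0.le h1 c 1]
  simp [wordMap, smul_smul, h0.ne']

theorem foldl_coding (h0 : 0 < lam) (h1 : lam < 1) (c : ℕ → ι) (j : ℕ) :
    ((List.range j).map c).foldl (fun z i => lam⁻¹ • (z - (1 - lam) • p i)) (coding lam p c)
      = coding lam p fun k => c (k + j) := by
  induction j with
  | zero => rfl
  | succ j ih =>
    rw [List.range_succ, List.map_append, List.foldl_append, ih]
    simp only [List.map_cons, List.map_nil, List.foldl_cons, List.foldl_nil]
    simpa [add_assoc, add_comm 1] using inv_smul_coding_sub hp h0 h1 (fun k => c (k + j))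

theorem exists_dist_foldl_coding_le (h0 : 0 < lam) (h1 : lam < 1) {X : Set E} {R : ℝ}
    (hXR : X ⊆ closedBall 0 R) (hX : X ⊆ ⋃ i, (fun y => lam • y + (1 - lam) • p i) '' X)
    {a : ℕ → ι} (huniv : ∀ b : List ι, ∃ m : ℕ, ∀ t : Fin b.length, a (m + t) = b.get t)
    {z : E} (hz : z ∈ X) (m : ℕ) :
    ∃ j, dist z (((List.range (j + 1)).map a).foldl
      (fun y i => lam⁻¹ • (y - (1 - lam) • p i)) (coding lam p a)) ≤ lam ^ m * (R + M) := by
  obtain ⟨b, w, hw, rfl⟩ := exists_eq_wordMap_of_mem hX hz m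
  obtain ⟨j, hj⟩ := exists_shift_eqOn_of_universal huniv b m
  refine ⟨j, ?_⟩
  rw [foldl_coding hp h0 h1, coding_eq_wordMap hp h0.le h1 _ m, wordMap_congr hj,
    dist_wordMap h0.le]
  gcongr
  calc dist w _ ≤ ‖w‖ + ‖coding lam p _‖ := dist_le_norm_add_norm _ _
    _ ≤ R + M := add_le_add (mem_closedBall_zero_iff.1 (hXR hw)) (norm_coding_le hp h0.le h1 _)

end HomogeneousIFS

theorem universal_coding_dense_orbit_general (d n : ℕ)
    (p : Fin (n + 1) → EuclideanSpace ℝ (Fin d))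
    (lam : ℝ) (hlam : lam ∈ Set.Ioo (0 : ℝ) 1)
    (X : Set (EuclideanSpace ℝ (Fin d))) (hXc : IsCompact X)
    (hfix : X = ⋃ i, (fun x => lam • x + (1 - lam) • p i) '' X)
    (x : EuclideanSpace ℝ (Fin d))
    (a : ℕ → Fin (n + 1))
    (hcode : x = ∑' j : ℕ, ((1 - lam) * lam ^ j) • p (a j))
    (huniv : ∀ b : List (Fin (n + 1)), ∃ m : ℕ, ∀ t : Fin b.length, a (m + t) = b.get t) :
    X ⊆ closure {y | ∃ j : ℕ,
      y = ((List.range (j + 1)).map a).foldl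
        (fun z i => lam⁻¹ • (z - (1 - lam) • p i)) x} := by
  obtain ⟨h0, h1⟩ := hlam
  obtain ⟨R, hR⟩ := hXc.isBounded.subset_closedBall 0
  obtain ⟨M, hM⟩ := (Set.finite_range p).isBounded.exists_norm_le
  have hx : x = coding lam p a := hcode
  intro z hz
  refine Metric.mem_closure_iff.2 fun ε hε => ?_
  have hsmall : Tendsto (fun m => lam ^ m * (R + M)) atTop (𝓝 0) := by
    simpa using (tendsto_pow_atTop_nhds_zero_of_lt_one h0.le h1).mul_const (R + M)
  obtain ⟨m, hm⟩ := (hsmall.eventually (gt_mem_nhds hε)).exists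
  obtain ⟨j, hj⟩ := exists_dist_foldl_coding_le (fun i => hM _ (Set.mem_range_self i)) h0 h1 hR
    hfix.subset huniv hz m
  exact ⟨_, ⟨j, hx ▸ rfl⟩, hj.trans_lt hm⟩

/-- for a homogeneous IFS `S_i(x) = λx + (1-λ)p_i` with attractor `X` and
inverse maps `T_i`, if `a` is a universal coding of `x ∈ X` (i.e. `π(a) = x` and every
finite word over the digit set occurs as a factor of `a`), then the orbit
`{(T_{a_j} ∘ ⋯ ∘ T_{a_1})(x) : j ≥ 1}` is dense in `X`. -/
theorem universal_coding_dense_orbit (d n : ℕ)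
    (p : Fin (n + 1) → EuclideanSpace ℝ (Fin d))
    (lam : ℝ) (hlam : lam ∈ Set.Ioo (0 : ℝ) 1)
    (X : Set (EuclideanSpace ℝ (Fin d))) (hX : X.Nonempty) (hXc : IsCompact X)
    (hfix : X = ⋃ i, (fun x => lam • x + (1 - lam) • p i) '' X)
    (x : EuclideanSpace ℝ (Fin d)) (hx : x ∈ X)
    (a : ℕ → Fin (n + 1))
    (hcode : x = ∑' j : ℕ, ((1 - lam) * lam ^ j) • p (a j))
    (huniv : ∀ b : List (Fin (n + 1)), ∃ m : ℕ, ∀ t : Fin b.length, a (m + t) = b.get t) :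
    X ⊆ closure {y | ∃ j : ℕ,
      y = ((List.range (j + 1)).map a).foldl
        (fun z i => lam⁻¹ • (z - (1 - lam) • p i)) x} :=
  universal_coding_dense_orbit_general d n p lam hlam X hXc hfix x a hcode huniv
end

section
/- Let D = {0,...,n} and fix k ≥ 2 and 1 < r ≤ k. For a word w = w_1⋯w_k ∈ D^k write w_pre = w_1⋯w_{k+1−r} (first k+1−r digits) and w_suf = w_{k+2−r}⋯w_k (last r−1 digits). If w_pre ≠ n^{k+1−r}, then there is exactly one index 0 ≤ p ≤ (n+1)^k − 2 such that the concatenation w_p w_{p+1} of the p-th and (p+1)-th words of D^k (in lexicographic order) equals w_suf · w · (w_pre)^+, where (w_pre)^+ is the lexicographic successor of w_pre among words of length k+1−r. -/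
/-!
Read the words of length `k` over `{0,…,n}` as base-`(n+1)` numerals, so that the `p`-th word
in lexicographic order is the numeral of `p`. The first `k` letters of `w_suf · w · (w_pre)⁺`
form `w_suf · w_pre`, of value `v = val(w_suf) (n+1)^(k+1-r) + val(w_pre)`; the last `k` form
`w_suf · (w_pre)⁺`, of value `v + 1`, because `w_pre ≠ n^(k+1-r)` means that adding one to
`w_pre` carries nothing into `w_suf`. Hence `p = v` works, and it is the only candidate since a
number below `(n+1)^k` is determined by its `k` digits.
-/

open Finset

namespace LexWord

/-- Words are read most significant letter first, so `wordOf b L x` is the `x`-th word of length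
`L` over `{0,…,b-1}` in lexicographic order, and `wordVal b L` is its inverse. -/
def wordVal (b L : ℕ) (c : ℕ → ℕ) : ℕ := ∑ i ∈ range L, c i * b ^ (L - 1 - i)

def wordOf (b L x : ℕ) (t : ℕ) : ℕ := x / b ^ (L - 1 - t) % b

variable {b L : ℕ} {c d : ℕ → ℕ}

@[simp]
lemma wordVal_zero : wordVal b 0 c = 0 := rfl

lemma wordVal_succ : wordVal b (L + 1) c = wordVal b L c * b + c L := by
  rw [wordVal, sum_range_succ, wordVal, sum_mul, Nat.add_sub_cancel, Nat.sub_self, pow_zero,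
    mul_one]
  congr 1
  refine sum_congr rfl fun i hi => ?_
  rw [mul_assoc, ← pow_succ, show L - 1 - i + 1 = L - i by grind]

lemma wordVal_congr (h : ∀ i < L, c i = d i) : wordVal b L c = wordVal b L d :=
  sum_congr rfl fun i hi => by rw [h i (mem_range.mp hi)]

lemma wordVal_lt_pow (hc : ∀ i < L, c i < b) : wordVal b L c < b ^ L := by
  induction L with
  | zero => simp
  | succ L ih =>
    have hval := ih fun i hi => hc i (by omega)
    have hlast := hc L (by omega)
    calc wordVal b (L + 1) c = wordVal b L c * b + c L := wordVal_succ
      _ < (wordVal b L c + 1) * b := by rw [add_one_mul]; omega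
      _ ≤ b ^ L * b := Nat.mul_le_mul_right b hval
      _ = b ^ (L + 1) := (pow_succ b L).symm

lemma wordOf_wordVal (hc : ∀ i < L, c i < b) {t : ℕ} (ht : t < L) :
    wordOf b L (wordVal b L c) t = c t := by
  induction L with
  | zero => omega
  | succ L ih =>
    have hb : 0 < b := (Nat.zero_le _).trans_lt (hc L (by omega))
    rw [wordOf, wordVal_succ]
    rcases Nat.lt_or_ge t L with htL | htL
    · rw [show L + 1 - 1 - t = L - 1 - t + 1 by omega, pow_succ', ← Nat.div_div_eq_div_mul,
        mul_comm, Nat.mul_add_div hb, Nat.div_eq_of_lt (hc L (by omega)), add_zero]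
      exact ih (fun i hi => hc i (by omega)) htL
    · obtain rfl : t = L := by omega
      rw [Nat.add_sub_cancel, Nat.sub_self, pow_zero, Nat.div_one,
        Nat.mul_add_mod_of_lt (hc t (by omega))]

lemma wordVal_wordOf {x : ℕ} (hx : x < b ^ L) : wordVal b L (wordOf b L x) = x := by
  induction L generalizing x with
  | zero => simp_all
  | succ L ih =>
    have hb : 0 < b := Nat.pos_of_ne_zero fun h => by simp_all [zero_pow]
    have hprefix : ∀ i < L, wordOf b (L + 1) x i = wordOf b L (x / b) i := fun i hi => by
      rw [wordOf, wordOf, Nat.div_div_eq_div_mul, ← pow_succ',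
        show L - 1 - i + 1 = L + 1 - 1 - i by omega]
    have hquot : x / b < b ^ L := Nat.div_lt_of_lt_mul (by rwa [← pow_succ'])
    rw [wordVal_succ, wordVal_congr hprefix, ih hquot, wordOf, Nat.add_sub_cancel, Nat.sub_self,
      pow_zero, Nat.div_one, Nat.div_add_mod']

lemma wordVal_append {q : ℕ} :
    wordVal b (q + L) (fun t => if t < q then c t else d (t - q)) =
      wordVal b q c * b ^ L + wordVal b L d := by
  induction L with
  | zero =>
    simp only [add_zero, pow_zero, mul_one, wordVal_zero]
    exact wordVal_congr (by simp_all)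
  | succ L ih =>
    rw [← add_assoc, wordVal_succ, ih, wordVal_succ, if_neg (by omega), Nat.add_sub_cancel_left,
      pow_succ]
    ring

lemma wordVal_add_one_lt_pow (hc : ∀ i < L, c i < b) (hnot : ∃ i < L, c i + 1 < b) :
    wordVal b L c + 1 < b ^ L := by
  have hb : 0 < b := by obtain ⟨i, -, hi⟩ := hnot; omega
  have hmono : wordVal b L c < wordVal b L fun _ => b - 1 := by
    refine sum_lt_sum (fun i hi => ?_) ?_
    · have := hc i (mem_range.mp hi)
      exact Nat.mul_le_mul_right _ (show c i ≤ b - 1 by omega)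
    · obtain ⟨i, hi, hci⟩ := hnot
      exact ⟨i, mem_range.mpr hi,
        Nat.mul_lt_mul_of_pos_right (show c i < b - 1 by omega) (by positivity)⟩
  have := wordVal_lt_pow (b := b) (L := L) (c := fun _ => b - 1) fun _ _ => by omega
  omega

lemma existsUnique_consecutive {lo hi : ℕ → ℕ} (hlo : ∀ t < L, lo t < b)
    (hhi : ∀ t < L, hi t < b) (hsucc : wordVal b L lo + 1 = wordVal b L hi) :
    ∃! p : ℕ, p ≤ b ^ L - 2 ∧ (∀ t < L, wordOf b L p t = lo t) ∧
      ∀ t < L, wordOf b L (p + 1) t = hi t := by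
  refine ⟨wordVal b L lo, ⟨?_, fun t ht => wordOf_wordVal hlo ht, fun t ht => ?_⟩, ?_⟩
  · have := wordVal_lt_pow hhi
    omega
  · rw [hsucc]
    exact wordOf_wordVal hhi ht
  · rintro p ⟨hp, hdigits, -⟩
    have : p < b ^ L := by
      have := wordVal_lt_pow hhi
      omega
    calc p = wordVal b L (wordOf b L p) := (wordVal_wordOf this).symm
      _ = wordVal b L lo := wordVal_congr hdigits

end LexWord

theorem unique_consecutive_pair_general (n k r : ℕ)
    (hr1 : 1 < r) (hrk : r ≤ k)
    (w : ℕ → ℕ) (hw : ∀ t < k, w t ≤ n)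
    (hpre : ¬ (∀ t < k + 1 - r, w t = n))
    (T : ℕ → ℕ)
    (hT : ∀ t, T t =
      if t < r - 1 then w (k + 1 - r + t)
      else if t < r - 1 + k then w (t - (r - 1))
      else ((∑ s ∈ Finset.range (k + 1 - r), w s * (n + 1) ^ (k - r - s)) + 1)
              / (n + 1) ^ (k - r - (t - (r - 1 + k))) % (n + 1)) :
    ∃! p : ℕ, p ≤ (n + 1) ^ k - 2 ∧
      (∀ t < k, p / (n + 1) ^ (k - 1 - t) % (n + 1) = T t) ∧
      (∀ t < k, (p + 1) / (n + 1) ^ (k - 1 - t) % (n + 1) = T (k + t)) := by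
  open LexWord in
  set b := n + 1
  set m := k + 1 - r
  set q := r - 1
  have hk : k = q + m := by omega
  have hwb : ∀ t < k, w t < b := fun t ht => Nat.lt_succ_of_le (hw t ht)
  set V := wordVal b m w
  have hVsum : ∑ s ∈ range m, w s * b ^ (k - r - s) = V :=
    sum_congr rfl fun s _ => by rw [show k - r - s = m - 1 - s by omega]
  have hV : V + 1 < b ^ m := by
    push Not at hpre
    obtain ⟨i, hi, hwi⟩ := hpre
    have := hw i (by omega)
    exact wordVal_add_one_lt_pow (fun t ht => hwb t (by omega)) ⟨i, hi, by omega⟩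
  have hlow : ∀ t < k, T t = if t < q then w (m + t) else w (t - q) := by
    intro t ht
    rw [hT]
    split_ifs <;> omega
  have hhigh : ∀ t < k,
      T (k + t) = if t < q then w (m + t) else wordOf b m (V + 1) (t - q) := by
    intro t ht
    rw [hT, if_neg (by omega), hVsum, wordOf]
    by_cases htq : t < q
    · rw [if_pos (by omega), if_pos htq, show k + t - q = m + t by omega]
    · rw [if_neg (by omega), if_neg htq,
        show k - r - (k + t - (q + k)) = m - 1 - (t - q) by omega]
  have hlow_lt : ∀ t < k, T t < b := fun t ht => by
    rw [hlow t ht]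
    split_ifs <;> exact hwb _ (by omega)
  have hhigh_lt : ∀ t < k, T (k + t) < b := fun t ht => by
    rw [hhigh t ht]
    split_ifs
    exacts [hwb _ (by omega), Nat.mod_lt _ (by omega)]
  refine existsUnique_consecutive hlow_lt hhigh_lt ?_
  rw [wordVal_congr hlow, wordVal_congr hhigh, hk, wordVal_append, wordVal_append,
    wordVal_wordOf hV, add_assoc]

/-- enumerate the words of length `k` over `{0,…,n}` in increasing
lexicographic order; the word with index `p` has `t`-th letter `p / (n+1)^(k-1-t) % (n+1)`.
Fix `1 < r ≤ k` and a word `w` (with letters `w 0, …, w (k-1) ≤ n`), and write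
`w_pre = w_1⋯w_{k+1-r}` (first `k+1-r` letters) and `w_suf = w_{k+2-r}⋯w_k` (last `r-1`
letters).  If `w_pre ≠ n^{k+1-r}`, then there is exactly one index `p ≤ (n+1)^k - 2` such
that the concatenation of the `p`-th and `(p+1)`-th words equals the length-`2k` word
`T = w_suf · w · (w_pre)⁺`, where `(w_pre)⁺` is the lexicographic successor of `w_pre`
(numerically: the word of value `val(w_pre) + 1`). -/
theorem unique_consecutive_pair (n k r : ℕ) (hn : 1 ≤ n) (hk : 2 ≤ k)
    (hr1 : 1 < r) (hrk : r ≤ k)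
    (w : ℕ → ℕ) (hw : ∀ t < k, w t ≤ n)
    (hpre : ¬ (∀ t < k + 1 - r, w t = n))
    (T : ℕ → ℕ)
    (hT : ∀ t, T t =
      if t < r - 1 then w (k + 1 - r + t)
      else if t < r - 1 + k then w (t - (r - 1))
      else ((∑ s ∈ Finset.range (k + 1 - r), w s * (n + 1) ^ (k - r - s)) + 1)
              / (n + 1) ^ (k - r - (t - (r - 1 + k))) % (n + 1)) :
    ∃! p : ℕ, p ≤ (n + 1) ^ k - 2 ∧
      (∀ t < k, p / (n + 1) ^ (k - 1 - t) % (n + 1) = T t) ∧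
      (∀ t < k, (p + 1) / (n + 1) ^ (k - 1 - t) % (n + 1) = T (k + t)) :=
  unique_consecutive_pair_general n k r hr1 hrk w hw hpre T hT
end

section
/- Let F = {p_0, ..., p_n} ⊂ ℝ^d not contained in any (d−1)-dimensional affine subspace, and suppose for λ close to 1 the attractor X of the homogeneous IFS S_i(x) = λx + (1−λ)p_i equals conv(F). If x lies on the boundary of X, i.e., in a bounding hyperplane V of conv(F) of dimension d−1, and p_i ∉ V, then no coding of x contains the digit i. Consequently every point having a universal coding lies in the interior of X: X_uni ⊆ int(X). -/
/-!
The weights `(1 - λ) λ^j` of a coding are positive and sum to `1`. So if a linear functional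
`g` is at most `g x` at every `p k`, the series `∑ (1 - λ) λ^j (g x - g (p (a j)))`, which sums
to `0`, has nonnegative terms and all of them vanish: every digit of a coding of `x` lies on the
supporting hyperplane through `x`. If a point `y` with a universal coding were not interior,
a supporting hyperplane at `y` would, because the `p k` span, miss some `p k`; yet that digit
occurs in the coding.
-/

open Set

section Coding

variable {E : Type*} {lam : ℝ}

lemma hasSum_coding_weights (hlam : lam ∈ Ioo (0 : ℝ) 1) :
    HasSum (fun j : ℕ => (1 - lam) * lam ^ j) 1 := by
  have h1 : 1 - lam ≠ 0 := sub_ne_zero.2 hlam.2.ne'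
  simpa [h1] using (hasSum_geometric_of_lt_one hlam.1.le hlam.2).mul_left (1 - lam)

lemma summable_coding_s18 [NormedAddCommGroup E] [NormedSpace ℝ E] [CompleteSpace E]
    (hlam : lam ∈ Ioo (0 : ℝ) 1) {v : ℕ → E} {C : ℝ} (hv : ∀ j, ‖v j‖ ≤ C) :
    Summable fun j : ℕ => ((1 - lam) * lam ^ j) • v j := by
  refine Summable.of_norm_bounded ((hasSum_coding_weights hlam).summable.mul_right C) fun j => ?_
  have hw : 0 ≤ (1 - lam) * lam ^ j := mul_nonneg (by linarith [hlam.2]) (pow_nonneg hlam.1.le j)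
  rw [norm_smul, Real.norm_of_nonneg hw]
  exact mul_le_mul_of_nonneg_left (hv j) hw

lemma apply_eq_of_hasSum_coding [AddCommGroup E] [Module ℝ E] [TopologicalSpace E]
    (hlam : lam ∈ Ioo (0 : ℝ) 1) (g : StrongDual ℝ E) {v : ℕ → E} {x : E}
    (hx : HasSum (fun j : ℕ => ((1 - lam) * lam ^ j) • v j) x) (hle : ∀ j, g (v j) ≤ g x) (j : ℕ) :
    g (v j) = g x := by
  have hw : ∀ j : ℕ, 0 < (1 - lam) * lam ^ j := fun j =>
    mul_pos (by linarith [hlam.2]) (pow_pos hlam.1 j)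
  have hgap : HasSum (fun j : ℕ => (1 - lam) * lam ^ j * (g x - g (v j))) 0 := by
    have hconst := (hasSum_coding_weights hlam).mul_right (g x)
    rw [one_mul] at hconst
    simpa [mul_sub] using hconst.sub (g.hasSum hx)
  have hzero := congrFun ((hasSum_zero_iff_of_nonneg fun j =>
    mul_nonneg (hw j).le (sub_nonneg.2 (hle j))).1 hgap) j
  have := (mul_eq_zero.1 hzero).resolve_left (hw j).ne'
  linarith

lemma apply_digit_eq_of_coding [NormedAddCommGroup E] [NormedSpace ℝ E] [CompleteSpace E]
    {ι : Type*} [Finite ι] (p : ι → E) (hlam : lam ∈ Ioo (0 : ℝ) 1) (g : StrongDual ℝ E)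
    {x : E} (hle : ∀ k, g (p k) ≤ g x) {a : ℕ → ι}
    (hx : x = ∑' j : ℕ, ((1 - lam) * lam ^ j) • p (a j)) (j : ℕ) :
    g (p (a j)) = g x := by
  obtain ⟨C, hC⟩ := Finite.exists_le fun k => ‖p k‖
  refine apply_eq_of_hasSum_coding hlam g ?_ (fun j => hle (a j)) j
  exact hx ▸ (summable_coding_s18 hlam fun j => hC (a j)).hasSum

end Coding

lemma exists_forall_le_of_notMem_interior {E : Type*} [AddCommGroup E] [Module ℝ E]
    [TopologicalSpace E] [IsTopologicalAddGroup E] [ContinuousSMul ℝ E] {X : Set E} {y : E}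
    (hX : Convex ℝ X) (hint : (interior X).Nonempty) (hy : y ∉ interior X) :
    ∃ g : StrongDual ℝ E, (∀ z ∈ X, g z ≤ g y) ∧ ∀ z ∈ interior X, g z < g y := by
  obtain ⟨g, hg⟩ := geometric_hahn_banach_open_point hX.interior isOpen_interior hy
  refine ⟨g, fun z hz => ?_, hg⟩
  have hclosure : closure (interior X) ⊆ {z | g z ≤ g y} :=
    closure_minimal (fun z hz => (hg z hz).le) (isClosed_le g.continuous continuous_const)
  rw [hX.closure_interior_eq_closure_of_nonempty_interior hint] at hclosure
  exact hclosure (subset_closure hz)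

lemma exists_apply_lt_of_mem_convexHull {𝕜 E ι : Type*} [Field 𝕜] [LinearOrder 𝕜]
    [IsStrictOrderedRing 𝕜] [AddCommGroup E] [Module 𝕜 E] (g : E →ₗ[𝕜] 𝕜) {p : ι → E}
    {x : E} (hx : x ∈ convexHull 𝕜 (range p)) {r : 𝕜} (hr : g x < r) :
    ∃ k, g (p k) < r := by
  by_contra! hge
  have hsub : range p ⊆ {w | r ≤ g w} := range_subset_iff.2 hge
  exact (convexHull_min hsub (convex_halfSpace_ge g.isLinear r) hx).not_gt hr

theorem boundary_missing_digit_and_Xuni_subset_interior_general (d n : ℕ)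
    (p : Fin (n + 1) → EuclideanSpace ℝ (Fin d))
    (hspan : affineSpan ℝ (Set.range p) = ⊤)
    (lam : ℝ) (hlam : lam ∈ Set.Ioo (0 : ℝ) 1)
    (X : Set (EuclideanSpace ℝ (Fin d)))
    (hXdef : X = convexHull ℝ (Set.range p))
    (f : EuclideanSpace ℝ (Fin d) →ₗ[ℝ] ℝ) (c : ℝ)
    (hsupp : ∀ y ∈ X, f y ≤ c)
    (x : EuclideanSpace ℝ (Fin d)) (hxc : f x = c)
    (i : Fin (n + 1)) (hpi : f (p i) ≠ c) :
    (∀ a : ℕ → Fin (n + 1),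
        x = ∑' j : ℕ, ((1 - lam) * lam ^ j) • p (a j) → ∀ j, a j ≠ i) ∧
    (∀ y ∈ X,
        (∃ a : ℕ → Fin (n + 1),
          y = ∑' j : ℕ, ((1 - lam) * lam ^ j) • p (a j) ∧
          ∀ b : List (Fin (n + 1)), ∃ m : ℕ, ∀ t : Fin b.length, a (m + t) = b.get t) →
        y ∈ interior X) := by
  have hpX : ∀ k, p k ∈ X := fun k => hXdef ▸ subset_convexHull ℝ _ (mem_range_self k)
  have hXconv : Convex ℝ X := hXdef ▸ convex_convexHull ℝ _
  refine ⟨fun a ha j hj => hpi ?_, fun y _ ⟨a, hay, huniv⟩ => ?_⟩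
  · have hle : ∀ k, f (p k) ≤ f x := fun k => hxc ▸ hsupp _ (hpX k)
    have := apply_digit_eq_of_coding p hlam (LinearMap.toContinuousLinearMap f) hle ha j
    rw [hj] at this
    simpa [hxc] using this
  · by_contra hyint
    have hint : (interior X).Nonempty := by
      rwa [hXconv.interior_nonempty_iff_affineSpan_eq_top, hXdef, affineSpan_convexHull]
    obtain ⟨g, hgX, hgint⟩ := exists_forall_le_of_notMem_interior hXconv hint hyint
    obtain ⟨x₀, hx₀⟩ := hint
    obtain ⟨k, hk⟩ := exists_apply_lt_of_mem_convexHull g.toLinearMap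
      (hXdef ▸ interior_subset hx₀) (hgint x₀ hx₀)
    obtain ⟨m, hm⟩ := huniv [k]
    have hdigit := apply_digit_eq_of_coding p hlam g (fun k => hgX _ (hpX k)) hay m
    have hak : a m = k := by simpa using hm ⟨0, Nat.zero_lt_one⟩
    rw [hak] at hdigit
    exact hk.ne hdigit

/-- let `F = {p_0,…,p_n} ⊂ ℝ^d` affinely span `ℝ^d`, `λ ∈ (0,1)`, and suppose
the attractor `X` of the homogeneous IFS `S_i(x) = λx + (1-λ)p_i` equals `conv(F)`.
If `x` lies on the boundary of `X` in the sense that `x` belongs to a supporting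
hyperplane `{f = c}` of `X` (with `f` a nonzero linear functional, `f ≤ c` on `X`,
`f x = c`), and `p_i` is not on this hyperplane, then no coding of `x` contains the digit
`i`.  Consequently, every point of `X` having a universal coding lies in the interior of
`X`: `X_uni ⊆ int(X)`. -/
theorem boundary_missing_digit_and_Xuni_subset_interior (d n : ℕ) (hd : 1 ≤ d)
    (p : Fin (n + 1) → EuclideanSpace ℝ (Fin d))
    (hspan : affineSpan ℝ (Set.range p) = ⊤)
    (lam : ℝ) (hlam : lam ∈ Set.Ioo (0 : ℝ) 1)
    (X : Set (EuclideanSpace ℝ (Fin d)))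
    (hXdef : X = convexHull ℝ (Set.range p))
    (f : EuclideanSpace ℝ (Fin d) →ₗ[ℝ] ℝ) (hf : f ≠ 0) (c : ℝ)
    (hsupp : ∀ y ∈ X, f y ≤ c)
    (x : EuclideanSpace ℝ (Fin d)) (hx : x ∈ X) (hxc : f x = c)
    (i : Fin (n + 1)) (hpi : f (p i) ≠ c) :
    (∀ a : ℕ → Fin (n + 1),
        x = ∑' j : ℕ, ((1 - lam) * lam ^ j) • p (a j) → ∀ j, a j ≠ i) ∧
    (∀ y ∈ X,
        (∃ a : ℕ → Fin (n + 1),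
          y = ∑' j : ℕ, ((1 - lam) * lam ^ j) • p (a j) ∧
          ∀ b : List (Fin (n + 1)), ∃ m : ℕ, ∀ t : Fin b.length, a (m + t) = b.get t) →
        y ∈ interior X) :=
  boundary_missing_digit_and_Xuni_subset_interior_general d n p hspan lam hlam X hXdef f c hsupp x
    hxc i hpi
end
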